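/- arXiv:1803.09554 — 10 statements merged into one kernel-verified Lean document; each statement's English description precedes it below -/
import Mathlib

section
/- Let e_1,...,e_n be the standard basis of F^n over a field F of characteristic 0. Then ∑_{(σ_1,...,σ_n) ∈ (S_n)^n} (∏_i sgn(σ_i)) · ∏_{j=1}^n det(e_{σ_1(j)}, e_{σ_2(j)}, ..., e_{σ_n(j)}) equals l(n), the number of even n×n Latin squares minus the number of odd n×n Latin squares. -/
open Equiv Finset

/-- The sign of a Latin square presented as a tuple of row permutations with injective columns:
the product of the signs of the row permutations and of the column permutations. -/
noncomputable def latinSquareSignedCount (n : ℕ) : ℤ :=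
  ∑ σ : Fin n → Equiv.Perm (Fin n),
    if h : ∀ j : Fin n, Function.Injective fun i => σ i j then
      (∏ i : Fin n, ((Equiv.Perm.sign (σ i) : ℤ))) *
      ∏ j : Fin n, ((Equiv.Perm.sign
        (Equiv.ofBijective (fun i => σ i j) ((Finite.injective_iff_bijective).mp (h j))) : ℤ))
    else 0

lemma det_basis_col {F : Type*} [Field F] {n : ℕ} (f : Fin n → Fin n)
    (hf : Function.Injective f) :
    (Matrix.of fun r i : Fin n => if r = f i then (1 : F) else 0).det
      = ((Equiv.Perm.sign
          (Equiv.ofBijective f ((Finite.injective_iff_bijective).mp hf)) : ℤ) : F) := by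
  set τ := Equiv.ofBijective f ((Finite.injective_iff_bijective).mp hf)
  have : (Matrix.of fun r i : Fin n => if r = f i then (1 : F) else 0)
      = (Equiv.Perm.permMatrix F τ).transpose := by
    ext r i
    simp [Matrix.transpose_apply, Equiv.Perm.permMatrix, PEquiv.toMatrix_apply,
      Equiv.toPEquiv, τ, eq_comm]
  rw [this, Matrix.det_transpose, Matrix.det_permutation]

/-- The alternating sum of products of determinants of standard basis vectors equals the
signed count of Latin squares. -/
theorem standard_basis_alternating_sum_eq_latin_count
    (F : Type*) [Field F] [CharZero F] (n : ℕ) (hn : 0 < n) :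
    (∑ σ : Fin n → Equiv.Perm (Fin n),
      (∏ i : Fin n, ((Equiv.Perm.sign (σ i) : ℤ) : F)) *
        ∏ j : Fin n, (Matrix.of fun r i : Fin n => if r = σ i j then (1 : F) else 0).det)
      = (latinSquareSignedCount n : F) := by
  rw [latinSquareSignedCount, Int.cast_sum]
  refine Finset.sum_congr rfl fun σ _ => ?_
  by_cases h : ∀ j : Fin n, Function.Injective fun i => σ i j
  · rw [dif_pos h]
    push_cast
    congr 1
    exact Finset.prod_congr rfl fun j _ => det_basis_col _ (h j)
  · rw [dif_neg h]
    push_neg at h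
    obtain ⟨j, hj⟩ := h
    rw [Function.not_injective_iff] at hj
    obtain ⟨a, b, hab, hne⟩ := hj
    have : (Matrix.of fun r i : Fin n => if r = σ i j then (1 : F) else 0).det = 0 := by
      refine Matrix.det_zero_of_column_eq hne fun k => ?_
      simp [hab]
    rw [Finset.prod_eq_zero (f := fun j : Fin n =>
        (Matrix.of fun r i : Fin n => if r = σ i j then (1 : F) else 0).det)
      (Finset.mem_univ j) this, mul_zero, Int.cast_zero]
end

section
/- Assume n is even and l(n) ≠ 0 (the Alon–Tarsi condition), where l(n) is the signed count of n×n Latin squares. Then Rota's basis conjecture holds for n over any field of characteristic 0: given n bases ¹A, ..., ⁿA of an n-dimensional vector space V over F (each a list of n vectors), there exist permutations σ_1,...,σ_n ∈ S_n such that for every j ∈ {1,...,n}, the n vectors ¹A_{σ_1(j)}, ²A_{σ_2(j)}, ..., ⁿA_{σ_n(j)} form a basis of V. -/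
open Equiv Finset

namespace AlonTarsiAux

variable {F : Type*} [Field F] {n : ℕ}

/-- Product of signs of the row permutations, in `F`. -/
noncomputable def sgnF (F : Type*) [Field F] {n : ℕ} (σ : Fin n → Equiv.Perm (Fin n)) : F :=
  ∏ i : Fin n, ((Equiv.Perm.sign (σ i) : ℤ) : F)

/-- Onn's sum: over all tuples of row permutations, the signed product of transversal
determinants. -/
noncomputable def SS (M : Fin n → Matrix (Fin n) (Fin n) F) : F :=
  ∑ σ : Fin n → Equiv.Perm (Fin n),
    sgnF F σ * ∏ j : Fin n, (Matrix.of fun i k => M i (σ i j) k).det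

/-- `SS` with the `i₀`-th matrix replaced by rows `v`, written via `updateRow`. -/
noncomputable def gAux (M : Fin n → Matrix (Fin n) (Fin n) F) (i₀ : Fin n)
    (v : Fin n → Fin n → F) : F :=
  ∑ σ : Fin n → Equiv.Perm (Fin n),
    sgnF F σ *
      ∏ j : Fin n, ((Matrix.of fun i k => M i (σ i j) k).updateRow i₀ (v (σ i₀ j))).det

lemma gAux_eq (M : Fin n → Matrix (Fin n) (Fin n) F) (i₀ : Fin n) (v : Fin n → Fin n → F) :
    SS (Function.update M i₀ (Matrix.of v)) = gAux M i₀ v := by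
  unfold SS gAux
  refine Finset.sum_congr rfl fun σ _ => ?_
  congr 1
  refine Finset.prod_congr rfl fun j _ => ?_
  congr 1
  ext i k
  by_cases h : i = i₀
  · subst h
    simp [Matrix.updateRow_self]
  · simp [Matrix.updateRow_ne h, Function.update_of_ne h]

/-- The linear map sending a row to the determinant of a matrix with that row replacing
row `i₀`. -/
noncomputable def detRowLin (A : Matrix (Fin n) (Fin n) F) (i₀ : Fin n) :
    (Fin n → F) →ₗ[F] F where
  toFun u := (A.updateRow i₀ u).det
  map_add' u w := Matrix.det_updateRow_add A i₀ u w
  map_smul' c u := Matrix.det_updateRow_smul A i₀ c u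

/-- `gAux` as a bundled multilinear map, built compositionally. -/
noncomputable def gML (M : Fin n → Matrix (Fin n) (Fin n) F) (i₀ : Fin n) :
    MultilinearMap F (fun _ : Fin n => (Fin n → F)) F :=
  ∑ σ : Fin n → Equiv.Perm (Fin n), sgnF F σ •
    MultilinearMap.domDomCongr (σ i₀)
      ((MultilinearMap.mkPiAlgebra F (Fin n) F).compLinearMap
        (fun j => detRowLin (Matrix.of fun i k => M i (σ i j) k) i₀))

lemma gML_apply (M : Fin n → Matrix (Fin n) (Fin n) F) (i₀ : Fin n) (v : Fin n → Fin n → F) :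
    gML M i₀ v = gAux M i₀ v := by
  unfold gML gAux
  rw [MultilinearMap.sum_apply]
  refine Finset.sum_congr rfl fun σ _ => ?_
  rw [MultilinearMap.smul_apply, smul_eq_mul]
  congr 1

/-- `gAux` as an alternating map in the rows of the `i₀`-th matrix. -/
noncomputable def gAlt (M : Fin n → Matrix (Fin n) (Fin n) F) (i₀ : Fin n) :
    (Fin n → F) [⋀^Fin n]→ₗ[F] F where
  toMultilinearMap := gML M i₀
  map_eq_zero_of_eq' v a b hv hab := by
    show gML M i₀ v = 0
    rw [gML_apply]
    unfold gAux
    refine Finset.sum_ninvolution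
      (fun σ => Function.update σ i₀ (Equiv.swap a b * σ i₀)) ?_ ?_ (fun _ => mem_univ _) ?_
    · intro σ
      have hdet : ∀ j : Fin n,
          ((Matrix.of fun i k =>
            M i ((Function.update σ i₀ (Equiv.swap a b * σ i₀)) i j) k).updateRow i₀
              (v ((Function.update σ i₀ (Equiv.swap a b * σ i₀)) i₀ j)))
          = ((Matrix.of fun i k => M i (σ i j) k).updateRow i₀ (v (σ i₀ j))) := by
        intro j
        have hva : ∀ x, v (Equiv.swap a b x) = v x := by
          intro x
          rcases eq_or_ne x a with rfl | hxa
          · rw [Equiv.swap_apply_left, hv]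
          rcases eq_or_ne x b with rfl | hxb
          · rw [Equiv.swap_apply_right, hv]
          · rw [Equiv.swap_apply_of_ne_of_ne hxa hxb]
        ext i k
        by_cases h : i = i₀
        · subst h
          rw [Matrix.updateRow_self, Matrix.updateRow_self, Function.update_self,
            Equiv.Perm.mul_apply, hva]
        · rw [Matrix.updateRow_ne h, Matrix.updateRow_ne h, Matrix.of_apply, Matrix.of_apply,
            Function.update_of_ne h]
      have hsgn : sgnF F (Function.update σ i₀ (Equiv.swap a b * σ i₀)) = - sgnF F σ := by
        unfold sgnF
        have h1 : (fun i => ((Equiv.Perm.sign ((Function.update σ i₀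
            (Equiv.swap a b * σ i₀)) i) : ℤ) : F))
            = Function.update (fun i => ((Equiv.Perm.sign (σ i) : ℤ) : F)) i₀
              ((Equiv.Perm.sign (Equiv.swap a b * σ i₀) : ℤ) : F) := by
          funext i
          by_cases h : i = i₀
          · subst h; simp
          · simp [Function.update_of_ne h]
        rw [h1, Finset.prod_update_of_mem (mem_univ i₀),
          ← Finset.mul_prod_erase univ _ (mem_univ i₀), Finset.sdiff_singleton_eq_erase]
        rw [Equiv.Perm.sign_mul, Equiv.Perm.sign_swap hab]
        push_cast
        ring
      simp only [hdet, hsgn]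
      ring
    · intro σ _ heq
      have hfix := congrFun heq i₀
      simp only [Function.update_self] at hfix
      have hswap : Equiv.swap a b = 1 :=
        mul_right_cancel (b := σ i₀) (by rw [one_mul]; exact hfix)
      have hba : b = a := by
        have := congrArg (fun e => e a) hswap
        simpa [Equiv.swap_apply_left] using this
      exact hab hba.symm
    · intro σ
      show Function.update (Function.update σ i₀ (Equiv.swap a b * σ i₀)) i₀
          (Equiv.swap a b * (Function.update σ i₀ (Equiv.swap a b * σ i₀)) i₀) = σ
      rw [Function.update_self, Function.update_idem, ← mul_assoc, Equiv.swap_mul_self,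
        one_mul, Function.update_eq_self]

lemma gAlt_apply (M : Fin n → Matrix (Fin n) (Fin n) F) (i₀ : Fin n) (v : Fin n → Fin n → F) :
    gAlt M i₀ v = gAux M i₀ v := gML_apply M i₀ v

lemma SS_step (M : Fin n → Matrix (Fin n) (Fin n) F) (i₀ : Fin n) :
    SS M = (M i₀).det * SS (Function.update M i₀ 1) := by
  have h1 : SS M = gAlt M i₀ (fun i => M i₀ i) := by
    rw [gAlt_apply, ← gAux_eq]
    congr 1
    have : Matrix.of (fun i => M i₀ i) = M i₀ := rfl
    rw [this, Function.update_eq_self]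
  have h2 : SS (Function.update M i₀ 1) = gAlt M i₀ (fun i => (Pi.basisFun F (Fin n)) i) := by
    rw [gAlt_apply, ← gAux_eq]
    have hb : Matrix.of (fun i => (Pi.basisFun F (Fin n)) i) = (1 : Matrix (Fin n) (Fin n) F) := by
      ext i k
      simp [Matrix.one_apply, Pi.single_apply, eq_comm]
    rw [hb]
  have h3 := (gAlt M i₀).eq_smul_basis_det (Pi.basisFun F (Fin n))
  have h4 : (Pi.basisFun F (Fin n)).det (fun i => M i₀ i) = (M i₀).det := by
    rw [Pi.basisFun_det]
    rfl
  calc SS M = gAlt M i₀ (fun i => M i₀ i) := h1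
    _ = ((gAlt M i₀) (Pi.basisFun F (Fin n)) • (Pi.basisFun F (Fin n)).det)
          (fun i => M i₀ i) := by rw [← h3]
    _ = (M i₀).det * SS (Function.update M i₀ 1) := by
        rw [AlternatingMap.smul_apply, h4, h2, smul_eq_mul]
        ring

lemma SS_prod (M : Fin n → Matrix (Fin n) (Fin n) F) :
    SS M = (∏ i, (M i).det) * SS (fun _ : Fin n => (1 : Matrix (Fin n) (Fin n) F)) := by
  have key : ∀ s : Finset (Fin n), ∀ M : Fin n → Matrix (Fin n) (Fin n) F,
      SS M = (∏ i ∈ s, (M i).det) * SS (fun i => if i ∈ s then 1 else M i) := by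
    intro s
    induction s using Finset.induction_on with
    | empty => intro M; simp
    | @insert a s ha ih =>
      intro M
      rw [SS_step M a, ih (Function.update M a 1), Finset.prod_insert ha]
      have e1 : ∏ i ∈ s, (Function.update M a 1 i).det = ∏ i ∈ s, (M i).det := by
        refine Finset.prod_congr rfl fun i hi => ?_
        rw [Function.update_of_ne (ne_of_mem_of_not_mem hi ha)]
      have e2 : (fun i => if i ∈ s then 1 else Function.update M a 1 i)
          = fun i => if i ∈ insert a s then 1 else M i := by
        funext i
        by_cases h : i = a
        · subst h; simp [ha]
        · simp [Function.update_of_ne h, Finset.mem_insert, h]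
      rw [e1, e2]
      ring
  have := key univ M
  simpa using this

lemma SS_one : SS (fun _ : Fin n => (1 : Matrix (Fin n) (Fin n) F))
    = ((latinSquareSignedCount n : ℤ) : F) := by
  unfold SS latinSquareSignedCount
  push_cast
  refine Finset.sum_congr rfl fun σ _ => ?_
  by_cases h : ∀ j : Fin n, Function.Injective fun i => σ i j
  · rw [dif_pos h]
    push_cast
    unfold sgnF
    congr 1
    refine Finset.prod_congr rfl fun j _ => ?_
    have hmat : (Matrix.of fun i k => (1 : Matrix (Fin n) (Fin n) F) (σ i j) k)
        = Equiv.Perm.permMatrix F (Equiv.ofBijective (fun i => σ i j)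
            ((Finite.injective_iff_bijective).mp (h j))) := by
      ext i k
      simp [Equiv.Perm.permMatrix, PEquiv.toMatrix_apply, Equiv.toPEquiv_apply,
        Matrix.one_apply, eq_comm]
    rw [hmat, Matrix.det_permutation]
  · rw [dif_neg h]
    obtain ⟨j, hj⟩ := not_forall.mp h
    obtain ⟨i, i', hii', hne⟩ := Function.not_injective_iff.mp hj
    have hz : (Matrix.of fun i k => (1 : Matrix (Fin n) (Fin n) F) (σ i j) k).det = 0 := by
      refine Matrix.det_zero_of_row_eq hne ?_
      funext k
      simp only [Matrix.of_apply]
      rw [hii']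
    rw [Finset.prod_eq_zero (mem_univ j) hz, mul_zero, Int.cast_zero]

end AlonTarsiAux

/-- Alon–Tarsi implies Rota's basis conjecture for even `n` (over characteristic `0`):
if `n` is even and the signed count of `n × n` Latin squares is nonzero, then given `n` bases
of an `n`-dimensional vector space one can reorder each basis so that the transversal
"column" families are all bases. -/
theorem alon_tarsi_implies_rota
    (F : Type*) [Field F] [CharZero F] (n : ℕ) (hn : 0 < n)
    (heven : Even n) (hAT : latinSquareSignedCount n ≠ 0)
    (V : Type*) [AddCommGroup V] [Module F V] [FiniteDimensional F V]
    (hdim : Module.finrank F V = n)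
    (A : Fin n → Fin n → V)
    (hA : ∀ i : Fin n, ∃ B : Module.Basis (Fin n) F V, ∀ j, B j = A i j) :
    ∃ σ : Fin n → Equiv.Perm (Fin n),
      ∀ j : Fin n, ∃ B : Module.Basis (Fin n) F V, ∀ i : Fin n, B i = A i (σ i j) := by
  classical
  obtain ⟨B₀, hB₀⟩ := hA ⟨0, hn⟩
  set M : Fin n → Matrix (Fin n) (Fin n) F :=
    fun i => Matrix.of fun j k => B₀.repr (A i j) k with hM
  have hdet : ∀ i, (M i).det ≠ 0 := by
    intro i
    obtain ⟨Bi, hBi⟩ := hA i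
    have htm : (M i).transpose = B₀.toMatrix Bi := by
      ext k j
      simp [hM, Module.Basis.toMatrix_apply, hBi]
    have hdd : (M i).det = B₀.det Bi := by
      rw [← Matrix.det_transpose, htm, Module.Basis.det_apply]
    rw [hdd]
    exact (B₀.isUnit_det Bi).ne_zero
  have hSS : AlonTarsiAux.SS M ≠ 0 := by
    rw [AlonTarsiAux.SS_prod, AlonTarsiAux.SS_one]
    exact mul_ne_zero (Finset.prod_ne_zero_iff.mpr fun i _ => hdet i)
      (Int.cast_ne_zero.mpr hAT)
  unfold AlonTarsiAux.SS at hSS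
  obtain ⟨σ, _, hσ⟩ := Finset.exists_ne_zero_of_sum_ne_zero hSS
  refine ⟨σ, fun j => ?_⟩
  have hd : (Matrix.of fun i k => M i (σ i j) k).det ≠ 0 :=
    Finset.prod_ne_zero_iff.mp (right_ne_zero_of_mul hσ) j (mem_univ j)
  have hw : IsUnit (B₀.det fun i => A i (σ i j)) := by
    rw [Module.Basis.det_apply]
    have htm2 : B₀.toMatrix (fun i => A i (σ i j))
        = (Matrix.of fun i k => M i (σ i j) k).transpose := by
      ext k i
      simp [Module.Basis.toMatrix_apply, hM]
    rw [htm2, Matrix.det_transpose]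
    exact isUnit_iff_ne_zero.mpr hd
  obtain ⟨hli, hsp⟩ := (Module.Basis.is_basis_iff_det B₀).mpr hw
  exact ⟨Module.Basis.mk hli hsp.ge, fun i => Module.Basis.mk_apply hli hsp.ge i⟩
end

section
/- (Svrtan's n! formula) Let V_2 = ℂ[t]_{<2} and V_n = ℂ[t]_{<n} be the spaces of complex polynomials of degree < 2 and < n respectively. For each pair i < j in {1,...,n}, fix an ordered pair (ⁱʲp_1, ⁱʲp_2) of elements of V_2. For each 'assignment of spinors' c (a choice, for each unordered pair {i,j}, of which of ⁱʲp_1, ⁱʲp_2 goes to the oriented edge (i,j), with the other going to (j,i)), set p^c_{ij} to be the chosen polynomial for edge (i,j), define p^c_i = ∏_{j ≠ i} p^c_{ij} ∈ V_n, and define sgn(c) = (−1)^{#{(i,j) : i<j and ⁱʲp_2 is assigned to (i,j)}}. Then ∑_{c} sgn(c) · det(p^c_1, ..., p^c_n) = n! · ∏_{1 ≤ i < j ≤ n} det(ⁱʲp_1, ⁱʲp_2), where det of a list of n polynomials in V_n is the determinant of their coefficient matrix in the basis 1, t, ..., t^{n−1}, and det(ⁱʲp_1, ⁱʲp_2) is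 the 2×2 determinant of coefficients in the basis 1, t. -/
open Equiv Finset Polynomial

variable (n : ℕ)

/-- The unordered pairs `{i, j}` with `i < j`, i.e. the edges of the complete graph on `n`
vertices, represented by their ordered version. -/
abbrev SpinorEdge (n : ℕ) := {e : Fin n × Fin n // e.1 < e.2}

/-- Given spinor bases `p i j 0, p i j 1` for `i < j` and an assignment
`c : SpinorEdge n → Bool` (with `c e = true` meaning the second spinor is assigned to the
oriented edge `(i, j)`), the spinor placed on the oriented edge `(i, j)`. -/
noncomputable def spinorOnEdge (p : Fin n → Fin n → Fin 2 → Polynomial ℂ)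
    (c : SpinorEdge n → Bool) (i j : Fin n) : Polynomial ℂ :=
  if h : i < j then p i j (if c ⟨(i, j), h⟩ then 1 else 0)
  else if h' : j < i then p j i (if c ⟨(j, i), h'⟩ then 0 else 1)
  else 0

/-- The polynomial `p^c_i = ∏_{j ≠ i} p^c_{ij}` attached to the vertex `i`. -/
noncomputable def vertexPoly (p : Fin n → Fin n → Fin 2 → Polynomial ℂ)
    (c : SpinorEdge n → Bool) (i : Fin n) : Polynomial ℂ :=
  ∏ j ∈ Finset.univ.erase i, spinorOnEdge n p c i j

/-- The sign of an assignment of spinors: `(-1)` to the number of swapped pairs. -/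
def spinorSign (c : SpinorEdge n → Bool) : ℂ :=
  ∏ e : SpinorEdge n, (if c e then (-1 : ℂ) else 1)

/-- evaluation of a polynomial of degree < 2 -/
lemma eval_of_degree_lt_two (q : Polynomial ℂ) (h : q.degree < 2) (y : ℂ) :
    q.eval y = q.coeff 0 + q.coeff 1 * y := by
  have h1 : q.degree ≤ 1 := Order.le_of_lt_succ h
  conv_lhs => rw [Polynomial.eq_X_add_C_of_degree_le_one h1]
  simp only [eval_add, eval_mul, eval_C, eval_X]
  ring

/-- product over edges as a double product with `if` -/
lemma prod_edges_key (g : Fin n → Fin n → ℂ) :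
    (∏ e : SpinorEdge n, g e.1.1 e.1.2) = ∏ i, ∏ j, if i < j then g i j else 1 := by
  have h1 : (∏ e ∈ (Finset.univ : Finset (Fin n × Fin n)).filter (fun e => e.1 < e.2),
      g e.1 e.2) = ∏ e : SpinorEdge n, g e.1.1 e.1.2 :=
    Finset.prod_subtype _ (by simp) (fun e : Fin n × Fin n => g e.1 e.2)
  rw [← h1, Finset.prod_filter, ← Finset.univ_product_univ, Finset.prod_product]

/-- product over ordered pairs i ≠ j pairs up into edges -/
lemma prod_pairs (f : Fin n → Fin n → ℂ) :
    (∏ i, ∏ j ∈ Finset.univ.erase i, f i j)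
      = ∏ e : SpinorEdge n, (f e.1.1 e.1.2 * f e.1.2 e.1.1) := by
  calc (∏ i, ∏ j ∈ Finset.univ.erase i, f i j)
      = ∏ i, ∏ j, ((if i < j then f i j else 1) * (if j < i then f i j else 1)) := by
        refine Finset.prod_congr rfl fun i _ => ?_
        rw [← Finset.filter_ne', Finset.prod_filter]
        refine Finset.prod_congr rfl fun j _ => ?_
        rcases lt_trichotomy i j with h|h|h
        · simp [h, h.ne', not_lt.mpr h.le]
        · simp [h]
        · simp [h, h.ne, not_lt.mpr h.le]
    _ = (∏ i, ∏ j, if i < j then f i j else 1) * (∏ i, ∏ j, if j < i then f i j else 1) := by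
        rw [← Finset.prod_mul_distrib]
        exact Finset.prod_congr rfl fun i _ => Finset.prod_mul_distrib
    _ = (∏ i, ∏ j, if i < j then f i j else 1) * (∏ i, ∏ j, if i < j then f j i else 1) := by
        rw [Finset.prod_comm (f := fun i j => if j < i then f i j else 1)]
    _ = ∏ e : SpinorEdge n, (f e.1.1 e.1.2 * f e.1.2 e.1.1) := by
        rw [← prod_edges_key n f, ← prod_edges_key n (fun i j => f j i),
          ← Finset.prod_mul_distrib]

/-- product over edges as double product -/
lemma prod_edges (f : Fin n → Fin n → ℂ) :
    (∏ e : SpinorEdge n, f e.1.1 e.1.2) = ∏ i, ∏ j ∈ Finset.Ioi i, f i j := by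
  rw [prod_edges_key]
  refine Finset.prod_congr rfl fun i _ => ?_
  rw [← Finset.prod_filter]
  refine Finset.prod_congr ?_ fun _ _ => rfl
  ext j
  simp

/-- Svrtan's `n!` formula: the alternating sum, over all `2^(n choose 2)` assignments of
spinors, of the determinants of the coefficient matrices of the vertex polynomials equals
`n!` times the product over edges of the `2 × 2` determinants of the spinor bases. -/
theorem svrtan_factorial_formula
    (hn : 0 < n) (p : Fin n → Fin n → Fin 2 → Polynomial ℂ)
    (hdeg : ∀ i j : Fin n, i < j → ∀ k : Fin 2, (p i j k).degree < 2) :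
    (∑ c : SpinorEdge n → Bool,
      spinorSign n c *
        (Matrix.of fun r i : Fin n => (vertexPoly n p c i).coeff r).det)
      = (n.factorial : ℂ) *
        ∏ e : SpinorEdge n,
          (Matrix.of fun r s : Fin 2 => (p e.1.1 e.1.2 s).coeff r).det := by
  classical
  set x : Fin n → ℂ := fun k => ((k : ℕ) : ℂ) with hxdef
  have hxinj : Function.Injective x := by
    intro a b hab
    exact Fin.ext (Nat.cast_injective hab)
  set V : ℂ := (Matrix.vandermonde x).det with hVdef
  have hV : V ≠ 0 := Matrix.det_vandermonde_ne_zero_iff.mpr hxinj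
  -- degree bounds
  have hspin : ∀ (c : SpinorEdge n → Bool) (i j : Fin n),
      (spinorOnEdge n p c i j).degree < 2 := by
    intro c i j
    unfold spinorOnEdge
    rcases lt_trichotomy i j with h|h|h
    · rw [dif_pos h]; exact hdeg _ _ h _
    · subst h
      rw [dif_neg (lt_irrefl i), dif_neg (lt_irrefl i), Polynomial.degree_zero]
      exact lt_of_lt_of_le (WithBot.bot_lt_coe 0) (by norm_num)
    · rw [dif_neg (asymm h), dif_pos h]; exact hdeg _ _ h _
  have hnat : ∀ (c : SpinorEdge n → Bool) (i : Fin n),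
      (vertexPoly n p c i).natDegree < n := by
    intro c i
    have h1 : (vertexPoly n p c i).natDegree
        ≤ ∑ j ∈ Finset.univ.erase i, (spinorOnEdge n p c i j).natDegree :=
      Polynomial.natDegree_prod_le _ _
    have hb : ∀ j ∈ Finset.univ.erase i, (spinorOnEdge n p c i j).natDegree ≤ 1 := by
      intro j _
      have hd := hspin c i j
      by_cases h0 : spinorOnEdge n p c i j = 0
      · simp [h0]
      · rw [Polynomial.degree_eq_natDegree h0] at hd
        have : (spinorOnEdge n p c i j).natDegree < 2 := by exact_mod_cast hd
        omega
    have h2 : (∑ j ∈ Finset.univ.erase i, (spinorOnEdge n p c i j).natDegree)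
        ≤ ∑ _j ∈ Finset.univ.erase i, 1 := Finset.sum_le_sum hb
    have h3 : (∑ _j ∈ Finset.univ.erase i, 1) = n - 1 := by
      simp [Finset.card_erase_of_mem]
    omega
  -- Step A : multiply by the Vandermonde determinant
  have stepA : ∀ c : SpinorEdge n → Bool,
      (Matrix.of fun r i : Fin n => (vertexPoly n p c i).coeff r).det * V
        = (Matrix.of fun k i : Fin n => (vertexPoly n p c i).eval (x k)).det := by
    intro c
    have hM : (Matrix.of fun k i : Fin n => (vertexPoly n p c i).eval (x k))
        = Matrix.vandermonde x * (Matrix.of fun r i : Fin n => (vertexPoly n p c i).coeff r) := by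
      ext k i
      rw [Matrix.mul_apply]
      simp only [Matrix.of_apply, Matrix.vandermonde]
      rw [Polynomial.eval_eq_sum_range' (hnat c i) (x k),
        ← Fin.sum_univ_eq_sum_range (fun r => (vertexPoly n p c i).coeff r * x k ^ r) n]
      exact Finset.sum_congr rfl fun r _ => (mul_comm _ _)
    rw [hM, Matrix.det_mul, mul_comm]
  -- Step B : the main computation
  have stepB : (∑ c : SpinorEdge n → Bool, spinorSign n c *
        (Matrix.of fun k i : Fin n => (vertexPoly n p c i).eval (x k)).det)
      = (n.factorial : ℂ) *
        (∏ e : SpinorEdge n,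
          (Matrix.of fun r s : Fin 2 => (p e.1.1 e.1.2 s).coeff r).det) * V := by
    calc (∑ c : SpinorEdge n → Bool, spinorSign n c *
          (Matrix.of fun k i : Fin n => (vertexPoly n p c i).eval (x k)).det)
        = ∑ c : SpinorEdge n → Bool, ∑ σ : Equiv.Perm (Fin n),
            spinorSign n c * (((Equiv.Perm.sign σ : ℤ) : ℂ) *
              ∏ i, (vertexPoly n p c i).eval (x (σ i))) := by
          refine Finset.sum_congr rfl fun c _ => ?_
          rw [Matrix.det_apply', Finset.mul_sum]
          simp only [Matrix.of_apply]
      _ = ∑ σ : Equiv.Perm (Fin n), ∑ c : SpinorEdge n → Bool,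
            spinorSign n c * (((Equiv.Perm.sign σ : ℤ) : ℂ) *
              ∏ i, (vertexPoly n p c i).eval (x (σ i))) := Finset.sum_comm
      _ = ∑ σ : Equiv.Perm (Fin n), ((Equiv.Perm.sign σ : ℤ) : ℂ) *
            ∑ c : SpinorEdge n → Bool, ∏ e : SpinorEdge n,
              ((if c e then (-1 : ℂ) else 1) *
                ((p e.1.1 e.1.2 (if c e then 1 else 0)).eval (x (σ e.1.1)) *
                 (p e.1.1 e.1.2 (if c e then 0 else 1)).eval (x (σ e.1.2)))) := by
          refine Finset.sum_congr rfl fun σ _ => ?_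
          rw [Finset.mul_sum]
          refine Finset.sum_congr rfl fun c _ => ?_
          have hvp : (∏ i, (vertexPoly n p c i).eval (x (σ i)))
              = ∏ e : SpinorEdge n,
                  ((spinorOnEdge n p c e.1.1 e.1.2).eval (x (σ e.1.1)) *
                   (spinorOnEdge n p c e.1.2 e.1.1).eval (x (σ e.1.2))) := by
            have := prod_pairs n
              (fun i j => (spinorOnEdge n p c i j).eval (x (σ i)))
            rw [← this]
            refine Finset.prod_congr rfl fun i _ => ?_
            rw [vertexPoly]
            exact Polynomial.eval_prod _ _ _
          rw [hvp, spinorSign]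
          rw [mul_left_comm, ← Finset.prod_mul_distrib]
          congr 1
          refine Finset.prod_congr rfl fun e _ => ?_
          have he1 : spinorOnEdge n p c e.1.1 e.1.2 = p e.1.1 e.1.2 (if c e then 1 else 0) := by
            unfold spinorOnEdge
            rw [dif_pos e.2]
          have he2 : spinorOnEdge n p c e.1.2 e.1.1 = p e.1.1 e.1.2 (if c e then 0 else 1) := by
            unfold spinorOnEdge
            rw [dif_neg (asymm e.2), dif_pos e.2]
          rw [he1, he2]
      _ = ∑ σ : Equiv.Perm (Fin n), ((Equiv.Perm.sign σ : ℤ) : ℂ) *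
            ∏ e : SpinorEdge n,
              ((Matrix.of fun r s : Fin 2 => (p e.1.1 e.1.2 s).coeff r).det *
                (x (σ e.1.2) - x (σ e.1.1))) := by
          refine Finset.sum_congr rfl fun σ _ => ?_
          congr 1
          refine ((Fintype.prod_sum (fun (e : SpinorEdge n) (b : Bool) =>
            ((if b then (-1 : ℂ) else 1) *
              ((p e.1.1 e.1.2 (if b then 1 else 0)).eval (x (σ e.1.1)) *
               (p e.1.1 e.1.2 (if b then 0 else 1)).eval (x (σ e.1.2)))))).symm).trans ?_
          refine Finset.prod_congr rfl fun e _ => ?_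
          rw [Fintype.sum_bool]
          simp only [Bool.false_eq_true, if_true, if_false, one_mul,
            neg_one_mul]
          rw [eval_of_degree_lt_two _ (hdeg _ _ e.2 0) , eval_of_degree_lt_two _ (hdeg _ _ e.2 1),
            eval_of_degree_lt_two _ (hdeg _ _ e.2 0), eval_of_degree_lt_two _ (hdeg _ _ e.2 1)]
          rw [Matrix.det_fin_two]
          simp only [Matrix.of_apply, Fin.val_zero, Fin.val_one]
          ring
      _ = ∑ σ : Equiv.Perm (Fin n), ((Equiv.Perm.sign σ : ℤ) : ℂ) *
            ((∏ e : SpinorEdge n,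
              (Matrix.of fun r s : Fin 2 => (p e.1.1 e.1.2 s).coeff r).det) *
              (((Equiv.Perm.sign σ : ℤ) : ℂ) * V)) := by
          refine Finset.sum_congr rfl fun σ _ => ?_
          congr 1
          rw [Finset.prod_mul_distrib]
          congr 1
          have h1 : (∏ e : SpinorEdge n, (x (σ e.1.2) - x (σ e.1.1)))
              = (Matrix.vandermonde (x ∘ σ)).det := by
            rw [Matrix.det_vandermonde]
            exact prod_edges n (fun i j => x (σ j) - x (σ i))
          have h2 : Matrix.vandermonde (x ∘ σ) = (Matrix.vandermonde x).submatrix σ id := by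
            ext k r
            simp [Matrix.vandermonde]
          rw [h1, h2, Matrix.det_permute]
      _ = (n.factorial : ℂ) *
            (∏ e : SpinorEdge n,
              (Matrix.of fun r s : Fin 2 => (p e.1.1 e.1.2 s).coeff r).det) * V := by
          have hsq : ∀ σ : Equiv.Perm (Fin n),
              ((Equiv.Perm.sign σ : ℤ) : ℂ) * ((Equiv.Perm.sign σ : ℤ) : ℂ) = 1 := by
            intro σ
            rw [← Int.cast_mul, ← Units.val_mul, Int.units_mul_self]
            norm_num
          calc (∑ σ : Equiv.Perm (Fin n), ((Equiv.Perm.sign σ : ℤ) : ℂ) *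
                ((∏ e : SpinorEdge n,
                  (Matrix.of fun r s : Fin 2 => (p e.1.1 e.1.2 s).coeff r).det) *
                  (((Equiv.Perm.sign σ : ℤ) : ℂ) * V)))
              = ∑ _σ : Equiv.Perm (Fin n),
                  (∏ e : SpinorEdge n,
                    (Matrix.of fun r s : Fin 2 => (p e.1.1 e.1.2 s).coeff r).det) * V := by
                refine Finset.sum_congr rfl fun σ _ => ?_
                rw [mul_left_comm, ← mul_assoc (((Equiv.Perm.sign σ : ℤ) : ℂ)), hsq σ, one_mul]
            _ = (n.factorial : ℂ) *
                  (∏ e : SpinorEdge n,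
                    (Matrix.of fun r s : Fin 2 => (p e.1.1 e.1.2 s).coeff r).det) * V := by
                rw [Finset.sum_const, Finset.card_univ, Fintype.card_perm, Fintype.card_fin,
                  nsmul_eq_mul, mul_assoc]
  -- conclusion
  apply mul_right_cancel₀ hV
  rw [Finset.sum_mul]
  calc (∑ c : SpinorEdge n → Bool, spinorSign n c *
          (Matrix.of fun r i : Fin n => (vertexPoly n p c i).coeff r).det * V)
      = ∑ c : SpinorEdge n → Bool, spinorSign n c *
          (Matrix.of fun k i : Fin n => (vertexPoly n p c i).eval (x k)).det := by
        refine Finset.sum_congr rfl fun c _ => ?_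
        rw [mul_assoc, stepA c]
    _ = (n.factorial : ℂ) *
          (∏ e : SpinorEdge n,
            (Matrix.of fun r s : Fin 2 => (p e.1.1 e.1.2 s).coeff r).det) * V := stepB
end

section
/- Specialize Svrtan's formula to ⁱʲp_1 = 1 and ⁱʲp_2 = t for all i < j: then ∑_{c} sgn(c) · det(p^c_1, ..., p^c_n) = n!, where the sum ranges over all 2^{C(n,2)} assignments c of spinors, p^c_i = ∏_{j≠i} p^c_{ij}, and det is taken of the coefficient matrices in the monomial basis 1, t, ..., t^{n−1} of ℂ[t]_{<n}. -/
open Equiv Finset Polynomial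

variable (n : ℕ)

def vtx (c : SpinorEdge n → Bool) (e : SpinorEdge n) : Fin n :=
  if c e then e.1.1 else e.1.2

def Dg (c : SpinorEdge n → Bool) (i : Fin n) : ℕ :=
  (Finset.univ.filter fun e => vtx n c e = i).card

def edgeOf (i j : Fin n) (h : i ≠ j) : SpinorEdge n :=
  if hlt : i < j then ⟨(i, j), hlt⟩
  else ⟨(j, i), lt_of_le_of_ne (le_of_not_gt hlt) h.symm⟩

lemma edgeOf_irrel (i j : Fin n) (h h' : i ≠ j) : edgeOf n i j h = edgeOf n i j h' := by
  unfold edgeOf; split <;> rfl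

lemma spinor_eq (c : SpinorEdge n → Bool) (i j : Fin n) (h : i ≠ j) :
    spinorOnEdge n (fun _ _ k => if k = 0 then 1 else X) c i j =
      if vtx n c (edgeOf n i j h) = i then X else 1 := by
  unfold spinorOnEdge edgeOf vtx
  rcases lt_or_gt_of_ne h with hlt | hgt
  · rw [dif_pos hlt, dif_pos hlt]
    by_cases hc : c ⟨(i, j), hlt⟩ <;> simp [hc, h.symm, Ne.symm h]
  · have hnlt : ¬ i < j := not_lt_of_gt hgt
    rw [dif_neg hnlt, dif_pos hgt, dif_neg hnlt]
    by_cases hc : c ⟨(j, i), hgt⟩ <;> simp [hc, h, h.symm, Ne.symm h]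

lemma vertexPoly_eq (c : SpinorEdge n → Bool) (i : Fin n) :
    vertexPoly n (fun _ _ k => if k = 0 then 1 else X) c i = X ^ Dg n c i := by
  unfold vertexPoly
  have key : ∀ j ∈ Finset.univ.erase i, spinorOnEdge n (fun _ _ k => if k = 0 then 1 else X) c i j
      = if (∃ hne : i ≠ j, vtx n c (edgeOf n i j hne) = i) then X else 1 := by
    intro j hj
    have hne : i ≠ j := (Finset.ne_of_mem_erase hj).symm
    rw [spinor_eq n c i j hne]
    congr 1
    simp only [eq_iff_iff]
    constructor
    · intro hv; exact ⟨hne, hv⟩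
    · rintro ⟨hne', hv⟩; rwa [edgeOf_irrel n i j hne' hne] at hv
  rw [Finset.prod_congr rfl key, Finset.prod_ite, Finset.prod_const, Finset.prod_const,
    one_pow, mul_one]
  congr 1
  unfold Dg
  apply Finset.card_bij (fun j hj => edgeOf n i j (Finset.mem_filter.mp hj |>.2.choose))
  · intro j hj
    simp only [Finset.mem_filter, Finset.mem_univ, true_and]
    exact (Finset.mem_filter.mp hj).2.choose_spec
  · intro a ha b hb hab
    have hna : i ≠ a := (Finset.mem_filter.mp ha).2.choose
    have hnb : i ≠ b := (Finset.mem_filter.mp hb).2.choose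
    rw [edgeOf_irrel n i a _ hna, edgeOf_irrel n i b _ hnb] at hab
    by_cases h1 : i < a <;> by_cases h2 : i < b <;>
        simp [edgeOf, h1, h2, Prod.ext_iff, Subtype.ext_iff] at hab <;>
      first
        | exact hab
        | exact absurd hab.1.symm hna
        | exact absurd hab.2 hnb
        | exact absurd hab.1 hna
        | exact absurd hab.2.symm hnb
        | exact absurd hab.1.symm hnb
        | exact absurd hab.2.symm hna
        | exact absurd hab.1 hnb
        | exact absurd hab.2 hna
  · intro e he
    simp only [Finset.mem_filter, Finset.mem_univ, true_and] at he
    have hlt := e.2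
    by_cases hc : c e
    · have hi : e.1.1 = i := by simpa [vtx, hc] using he
      have hne : i ≠ e.1.2 := by rw [← hi]; exact ne_of_lt hlt
      have hee : edgeOf n i e.1.2 hne = e := by
        unfold edgeOf
        rw [dif_pos (hi ▸ hlt)]
        exact Subtype.ext (Prod.ext_iff.mpr ⟨by simp [hi], by simp [hi]⟩)
      refine ⟨e.1.2, Finset.mem_filter.mpr ⟨Finset.mem_erase.mpr ⟨hne.symm, Finset.mem_univ _⟩,
        hne, by rw [hee]; exact he⟩, ?_⟩
      rw [edgeOf_irrel n i e.1.2 _ hne]; exact hee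
    · have hi : e.1.2 = i := by simpa [vtx, hc] using he
      have hne : i ≠ e.1.1 := by rw [← hi]; exact (ne_of_lt hlt).symm
      have hee : edgeOf n i e.1.1 hne = e := by
        unfold edgeOf
        rw [dif_neg (by rw [← hi]; exact not_lt_of_gt hlt)]
        exact Subtype.ext (Prod.ext_iff.mpr ⟨by simp [hi], by simp [hi]⟩)
      refine ⟨e.1.1, Finset.mem_filter.mpr ⟨Finset.mem_erase.mpr ⟨hne.symm, Finset.mem_univ _⟩,
        hne, by rw [hee]; exact he⟩, ?_⟩
      rw [edgeOf_irrel n i e.1.1 _ hne]; exact hee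

lemma monomial_eq_prod (f : Fin n → ℕ) :
    (MvPolynomial.monomial (Finsupp.equivFunOnFinite.symm f) (1:ℂ)) =
      ∏ i, MvPolynomial.X i ^ f i := by
  rw [MvPolynomial.monomial_eq]
  simp [Finsupp.prod_pow]

lemma edge_prod_eq_prod_Ioi (g : Fin n → Fin n → MvPolynomial (Fin n) ℂ) :
    (∏ e : SpinorEdge n, g e.1.1 e.1.2) = ∏ i, ∏ j ∈ Finset.Ioi i, g i j := by
  rw [Finset.prod_sigma']
  refine (Finset.prod_bij (fun (p : Σ _ : Fin n, Fin n) hp =>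
    (⟨(p.1, p.2), by simpa using (Finset.mem_sigma.mp hp).2⟩ : SpinorEdge n)) ?_ ?_ ?_ ?_).symm
  · intro p hp; exact Finset.mem_univ _
  · intro a ha b hb hab
    simp only [Subtype.mk.injEq, Prod.mk.injEq] at hab
    exact Sigma.ext hab.1 (heq_of_eq hab.2)
  · intro e he
    exact ⟨⟨e.1.1, e.1.2⟩, Finset.mem_sigma.mpr ⟨Finset.mem_univ _, Finset.mem_Ioi.mpr e.2⟩, rfl⟩
  · intro p hp; rfl

lemma gen_id :
    (∑ c : SpinorEdge n → Bool, spinorSign n c •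
        (MvPolynomial.monomial (Finsupp.equivFunOnFinite.symm (Dg n c)) (1:ℂ)))
    = ∑ σ : Perm (Fin n), ((Perm.sign σ : ℤ) : ℂ) •
        MvPolynomial.monomial (Finsupp.equivFunOnFinite.symm fun i => (σ i : ℕ)) 1 := by
  have lhs : (∑ c : SpinorEdge n → Bool, spinorSign n c •
        (MvPolynomial.monomial (Finsupp.equivFunOnFinite.symm (Dg n c)) (1:ℂ)))
      = ∏ e : SpinorEdge n, (MvPolynomial.X e.1.2 - MvPolynomial.X e.1.1) := by
    have step1 : (∏ e : SpinorEdge n, (MvPolynomial.X e.1.2 - MvPolynomial.X e.1.1 : MvPolynomial (Fin n) ℂ))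
        = ∑ c ∈ Fintype.piFinset (fun _ : SpinorEdge n => (Finset.univ : Finset Bool)),
            ∏ e : SpinorEdge n,
              (if c e then -(MvPolynomial.X e.1.1 : MvPolynomial (Fin n) ℂ) else MvPolynomial.X e.1.2) := by
      have hh := Finset.prod_univ_sum (fun _ : SpinorEdge n => (Finset.univ : Finset Bool))
        (fun e b => if b then -(MvPolynomial.X e.1.1 : MvPolynomial (Fin n) ℂ) else MvPolynomial.X e.1.2)
      rw [← hh]
      exact Finset.prod_congr rfl fun e _ => by
        rw [Fintype.sum_bool]; simp [sub_eq_neg_add, add_comm]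
    rw [step1, Fintype.piFinset_univ]
    refine Finset.sum_congr rfl fun c _ => ?_
    have term : ∀ e : SpinorEdge n,
        (if c e then -(MvPolynomial.X e.1.1 : MvPolynomial (Fin n) ℂ) else MvPolynomial.X e.1.2)
        = (if c e then (-1 : MvPolynomial (Fin n) ℂ) else 1) * MvPolynomial.X (vtx n c e) := by
      intro e; by_cases hc : c e <;> simp [hc, vtx]
    rw [Finset.prod_congr rfl (fun e _ => term e), Finset.prod_mul_distrib]
    have sgn : (∏ e : SpinorEdge n, (if c e then (-1 : MvPolynomial (Fin n) ℂ) else 1))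
        = MvPolynomial.C (spinorSign n c) := by
      rw [spinorSign, map_prod]
      refine Finset.prod_congr rfl fun e _ => ?_
      by_cases hc : c e <;> simp [hc]
    have fib : (∏ e : SpinorEdge n, (MvPolynomial.X (vtx n c e) : MvPolynomial (Fin n) ℂ))
        = ∏ i, MvPolynomial.X i ^ Dg n c i := by
      rw [← Finset.prod_fiberwise_of_maps_to (g := vtx n c) (t := Finset.univ)
        (fun e _ => Finset.mem_univ _)]
      refine Finset.prod_congr rfl fun i _ => ?_
      rw [Finset.prod_congr rfl (fun e he => by
        rw [(Finset.mem_filter.mp he).2]), Finset.prod_const]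
      rfl
    rw [sgn, fib, monomial_eq_prod, MvPolynomial.smul_eq_C_mul]
  have rhs : (∑ σ : Perm (Fin n), ((Perm.sign σ : ℤ) : ℂ) •
        MvPolynomial.monomial (Finsupp.equivFunOnFinite.symm fun i => (σ i : ℕ)) (1:ℂ))
      = ∏ e : SpinorEdge n, (MvPolynomial.X e.1.2 - MvPolynomial.X e.1.1) := by
    rw [edge_prod_eq_prod_Ioi n (fun a b => MvPolynomial.X b - MvPolynomial.X a), ← Matrix.det_vandermonde ((MvPolynomial.X : Fin n → MvPolynomial (Fin n) ℂ)),
      ← Matrix.det_transpose, Matrix.det_apply]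
    refine Finset.sum_congr rfl fun σ _ => ?_
    rw [monomial_eq_prod]
    have : (∏ i, (Matrix.vandermonde ((MvPolynomial.X : Fin n → MvPolynomial (Fin n) ℂ))).transpose (σ i) i)
        = ∏ i, MvPolynomial.X i ^ ((σ i : ℕ)) := by
      refine Finset.prod_congr rfl fun i _ => ?_
      simp [Matrix.vandermonde, Matrix.transpose_apply]
    rw [this, Units.smul_def, ← Int.cast_smul_eq_zsmul ℂ]
  rw [lhs, rhs]

lemma coe_perm_eq_iff (σ τ : Perm (Fin n)) :
    ((fun i => ((τ i : ℕ))) = fun i => ((σ i) : ℕ)) ↔ τ = σ := by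
  constructor
  · intro h
    ext i
    exact congrArg Fin.val (Fin.val_injective (congrFun h i) : τ i = σ i)
  · rintro rfl; rfl

lemma hcoeff (σ : Perm (Fin n)) :
    (∑ c : SpinorEdge n → Bool,
      spinorSign n c * (if Dg n c = (fun i => ((σ i) : ℕ)) then 1 else 0))
    = ((Perm.sign σ : ℤ) : ℂ) := by
  have h := congrArg
    (MvPolynomial.coeff (Finsupp.equivFunOnFinite.symm fun i => ((σ i : ℕ)))) (gen_id n)
  simp only [MvPolynomial.coeff_sum, MvPolynomial.coeff_smul, MvPolynomial.coeff_monomial,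
    EmbeddingLike.apply_eq_iff_eq, smul_eq_mul] at h
  rw [h]
  have h2 : ∀ τ : Perm (Fin n),
      ((Perm.sign τ : ℤ) : ℂ) * (if (fun i => ((τ i) : ℕ)) = fun i => ((σ i) : ℕ) then 1 else 0)
      = ((Perm.sign τ : ℤ) : ℂ) * (if τ = σ then 1 else 0) :=
    fun τ => congrArg _ (if_congr (coe_perm_eq_iff n σ τ) rfl rfl)
  rw [Finset.sum_congr rfl fun τ _ => h2 τ,
    Finset.sum_eq_single σ (fun τ _ hτ => by rw [if_neg hτ, mul_zero])
      (fun hσ => absurd (Finset.mem_univ σ) hσ), if_pos rfl, mul_one]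


/-- Svrtan's formula specialized to `ⁱʲp_1 = 1`, `ⁱʲp_2 = t`: the alternating sum of the
determinants over all assignments of spinors equals `n!`. -/
theorem svrtan_specialized_sum_eq_factorial (hn : 0 < n) :
    (∑ c : SpinorEdge n → Bool,
      spinorSign n c *
        (Matrix.of fun r i : Fin n =>
          (vertexPoly n (fun _ _ k => if k = 0 then 1 else X) c i).coeff r).det)
      = (n.factorial : ℂ) := by

  have hdet : ∀ c : SpinorEdge n → Bool,
      (Matrix.of fun r i : Fin n =>
          (vertexPoly n (fun _ _ k => if k = 0 then 1 else X) c i).coeff r).det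
      = ∑ σ : Perm (Fin n), ((Perm.sign σ : ℤ) : ℂ) *
          (if Dg n c = (fun i => ((σ i) : ℕ)) then 1 else 0) := by
    intro c
    rw [Matrix.det_apply]
    refine Finset.sum_congr rfl fun σ _ => ?_
    have hent : ∀ i, (Matrix.of fun r i : Fin n =>
        (vertexPoly n (fun _ _ k => if k = 0 then 1 else X) c i).coeff r) (σ i) i
        = if ((σ i : ℕ)) = Dg n c i then 1 else 0 := by
      intro i
      rw [Matrix.of_apply, vertexPoly_eq, Polynomial.coeff_X_pow]
    rw [Finset.prod_congr rfl (fun i _ => hent i), Finset.prod_boole,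
      Units.smul_def, ← Int.cast_smul_eq_zsmul ℂ, smul_eq_mul]
    congr 1
    by_cases h : Dg n c = (fun i => ((σ i) : ℕ))
    · rw [if_pos, if_pos h]
      intro i _; exact (congrFun h i).symm
    · rw [if_neg, if_neg h]
      intro hall
      exact h (funext fun i => (hall i (Finset.mem_univ i)).symm)
  calc (∑ c : SpinorEdge n → Bool,
      spinorSign n c *
        (Matrix.of fun r i : Fin n =>
          (vertexPoly n (fun _ _ k => if k = 0 then 1 else X) c i).coeff r).det)
      = ∑ c : SpinorEdge n → Bool, ∑ σ : Perm (Fin n),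
          ((Perm.sign σ : ℤ) : ℂ) *
            (spinorSign n c * (if Dg n c = (fun i => ((σ i) : ℕ)) then 1 else 0)) := by
        refine Finset.sum_congr rfl fun c _ => ?_
        rw [hdet c, Finset.mul_sum]
        exact Finset.sum_congr rfl fun σ _ => by ring
    _ = ∑ σ : Perm (Fin n), ((Perm.sign σ : ℤ) : ℂ) *
          (∑ c : SpinorEdge n → Bool,
            spinorSign n c * (if Dg n c = (fun i => ((σ i) : ℕ)) then 1 else 0)) := by
        rw [Finset.sum_comm]
        exact Finset.sum_congr rfl fun σ _ => (Finset.mul_sum _ _ _).symm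
    _ = ∑ σ : Perm (Fin n), ((Perm.sign σ : ℤ) : ℂ) * ((Perm.sign σ : ℤ) : ℂ) := by
        exact Finset.sum_congr rfl fun σ _ => by rw [hcoeff n σ]
    _ = ∑ _σ : Perm (Fin n), (1 : ℂ) := by
        refine Finset.sum_congr rfl fun σ _ => ?_
        rcases Int.units_eq_one_or (Perm.sign σ) with h | h <;> rw [h] <;> norm_num
    _ = (n.factorial : ℂ) := by
        rw [Finset.sum_const, Finset.card_univ, Fintype.card_perm, Fintype.card_fin,
          nsmul_eq_mul, mul_one]
end

section
/- For each unordered pair {i,j} ⊂ {1,...,n} (i<j), suppose (ⁱʲp_1, ⁱʲp_2) is a basis of the 2-dimensional space ℂ[t]_{<2} of polynomials of degree < 2. Then there exists an assignment c of spinors (choosing for each pair which basis element goes to edge (i,j) and which to (j,i)) such that the n polynomials p^c_i = ∏_{j≠i} p^c_{ij} (each of degree < n) are linearly independent over ℂ. -/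
open Equiv Finset Polynomial

variable (n : ℕ)

namespace SvA

open Matrix

variable {n : ℕ}

noncomputable def toP (q : SpinorEdge n → Fin 2 → Polynomial ℂ) :
    Fin n → Fin n → Fin 2 → Polynomial ℂ :=
  fun i j k => if h : i < j then q ⟨(i, j), h⟩ k else 0

lemma toP_apply (q : SpinorEdge n → Fin 2 → Polynomial ℂ) {i j : Fin n} (h : i < j) (k : Fin 2) :
    toP q i j k = q ⟨(i, j), h⟩ k := dif_pos h

lemma spinorOnEdge_lt (p : Fin n → Fin n → Fin 2 → Polynomial ℂ) (c : SpinorEdge n → Bool)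
    {i j : Fin n} (h : i < j) :
    spinorOnEdge n p c i j = p i j (if c ⟨(i, j), h⟩ then 1 else 0) := by
  rw [spinorOnEdge, dif_pos h]

lemma spinorOnEdge_gt (p : Fin n → Fin n → Fin 2 → Polynomial ℂ) (c : SpinorEdge n → Bool)
    {i j : Fin n} (h : i < j) :
    spinorOnEdge n p c j i = p i j (if c ⟨(i, j), h⟩ then 0 else 1) := by
  rw [spinorOnEdge, dif_neg (lt_asymm h), dif_pos h]

lemma spinorOnEdge_self (p : Fin n → Fin n → Fin 2 → Polynomial ℂ) (c : SpinorEdge n → Bool)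
    (i : Fin n) : spinorOnEdge n p c i i = 0 := by
  rw [spinorOnEdge, dif_neg (lt_irrefl i), dif_neg (lt_irrefl i)]

lemma spinorOnEdge_congr {p p' : Fin n → Fin n → Fin 2 → Polynomial ℂ}
    (h : ∀ i j : Fin n, i < j → ∀ k, p i j k = p' i j k) (c : SpinorEdge n → Bool) (i j : Fin n) :
    spinorOnEdge n p c i j = spinorOnEdge n p' c i j := by
  rcases lt_trichotomy i j with hij | hij | hij
  · rw [spinorOnEdge_lt _ _ hij, spinorOnEdge_lt _ _ hij, h _ _ hij]
  · subst hij; rw [spinorOnEdge_self, spinorOnEdge_self]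
  · rw [spinorOnEdge_gt _ _ hij, spinorOnEdge_gt _ _ hij, h _ _ hij]

lemma vertexPoly_congr {p p' : Fin n → Fin n → Fin 2 → Polynomial ℂ}
    (h : ∀ i j : Fin n, i < j → ∀ k, p i j k = p' i j k) (c : SpinorEdge n → Bool) :
    vertexPoly n p c = vertexPoly n p' c := by
  funext m
  exact Finset.prod_congr rfl fun j _ => spinorOnEdge_congr h c m j

lemma spinorOnEdge_toP_update (q : SpinorEdge n → Fin 2 → Polynomial ℂ) (e : SpinorEdge n)
    (w : Fin 2 → Polynomial ℂ) (c : SpinorEdge n → Bool) {i j : Fin n}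
    (h1 : e.1 ≠ (i, j)) (h2 : e.1 ≠ (j, i)) :
    spinorOnEdge n (toP (Function.update q e w)) c i j = spinorOnEdge n (toP q) c i j := by
  rcases lt_trichotomy i j with hij | hij | hij
  · have hne : (⟨(i, j), hij⟩ : SpinorEdge n) ≠ e := fun hc => h1 (by rw [← hc])
    rw [spinorOnEdge_lt _ _ hij, spinorOnEdge_lt _ _ hij, toP_apply _ hij, toP_apply _ hij,
      Function.update_of_ne hne]
  · subst hij; rw [spinorOnEdge_self, spinorOnEdge_self]
  · have hne : (⟨(j, i), hij⟩ : SpinorEdge n) ≠ e := fun hc => h2 (by rw [← hc])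
    rw [spinorOnEdge_gt _ _ hij, spinorOnEdge_gt _ _ hij, toP_apply _ hij, toP_apply _ hij,
      Function.update_of_ne hne]

lemma spinorOnEdge_update_c (p : Fin n → Fin n → Fin 2 → Polynomial ℂ) (c : SpinorEdge n → Bool)
    (e : SpinorEdge n) (b : Bool) {i j : Fin n}
    (h1 : e.1 ≠ (i, j)) (h2 : e.1 ≠ (j, i)) :
    spinorOnEdge n p (Function.update c e b) i j = spinorOnEdge n p c i j := by
  rcases lt_trichotomy i j with hij | hij | hij
  · have hne : (⟨(i, j), hij⟩ : SpinorEdge n) ≠ e := fun hc => h1 (by rw [← hc])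
    rw [spinorOnEdge_lt _ _ hij, spinorOnEdge_lt _ _ hij, Function.update_of_ne hne]
  · subst hij; rw [spinorOnEdge_self, spinorOnEdge_self]
  · have hne : (⟨(j, i), hij⟩ : SpinorEdge n) ≠ e := fun hc => h2 (by rw [← hc])
    rw [spinorOnEdge_gt _ _ hij, spinorOnEdge_gt _ _ hij, Function.update_of_ne hne]

end SvA

namespace SvA

open Matrix

variable {n : ℕ}

noncomputable def rfac (q : SpinorEdge n → Fin 2 → Polynomial ℂ) (c : SpinorEdge n → Bool)
    (m m' : Fin n) : Polynomial ℂ :=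
  ∏ j ∈ (Finset.univ.erase m).erase m', spinorOnEdge n (toP q) c m j

lemma rfac_update_q (q : SpinorEdge n → Fin 2 → Polynomial ℂ) (e : SpinorEdge n)
    (w : Fin 2 → Polynomial ℂ) (c : SpinorEdge n → Bool) {m m' : Fin n}
    (hm : e.1 = (m, m') ∨ e.1 = (m', m)) :
    rfac (Function.update q e w) c m m' = rfac q c m m' := by
  refine Finset.prod_congr rfl fun j hj => ?_
  have hj1 : j ≠ m' := (Finset.mem_erase.1 hj).1
  have hj2 : j ≠ m := (Finset.mem_erase.1 (Finset.mem_erase.1 hj).2).1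
  apply spinorOnEdge_toP_update
  · intro hc
    rcases hm with h | h <;> rw [h] at hc <;>
      simp only [Prod.mk.injEq] at hc
    · exact hj1 hc.2.symm
    · exact hj2 hc.2.symm
  · intro hc
    rcases hm with h | h <;> rw [h] at hc <;>
      simp only [Prod.mk.injEq] at hc
    · exact hj2 hc.1.symm
    · exact hj1 hc.1.symm

lemma rfac_update_c (q : SpinorEdge n → Fin 2 → Polynomial ℂ) (e : SpinorEdge n)
    (b : Bool) (c : SpinorEdge n → Bool) {m m' : Fin n}
    (hm : e.1 = (m, m') ∨ e.1 = (m', m)) :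
    rfac q (Function.update c e b) m m' = rfac q c m m' := by
  refine Finset.prod_congr rfl fun j hj => ?_
  have hj1 : j ≠ m' := (Finset.mem_erase.1 hj).1
  have hj2 : j ≠ m := (Finset.mem_erase.1 (Finset.mem_erase.1 hj).2).1
  apply spinorOnEdge_update_c
  · intro hc
    rcases hm with h | h <;> rw [h] at hc <;>
      simp only [Prod.mk.injEq] at hc
    · exact hj1 hc.2.symm
    · exact hj2 hc.2.symm
  · intro hc
    rcases hm with h | h <;> rw [h] at hc <;>
      simp only [Prod.mk.injEq] at hc
    · exact hj2 hc.1.symm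
    · exact hj1 hc.1.symm

lemma vertexPoly_update_q (q : SpinorEdge n → Fin 2 → Polynomial ℂ) (e : SpinorEdge n)
    (w : Fin 2 → Polynomial ℂ) (c : SpinorEdge n → Bool) {m : Fin n}
    (h1 : m ≠ e.1.1) (h2 : m ≠ e.1.2) :
    vertexPoly n (toP (Function.update q e w)) c m = vertexPoly n (toP q) c m := by
  refine Finset.prod_congr rfl fun j _ => ?_
  apply spinorOnEdge_toP_update
  · intro hc; exact h1 (by rw [hc])
  · intro hc; exact h2 (by rw [hc])

lemma vertexPoly_update_c (q : SpinorEdge n → Fin 2 → Polynomial ℂ) (e : SpinorEdge n)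
    (b : Bool) (c : SpinorEdge n → Bool) {m : Fin n}
    (h1 : m ≠ e.1.1) (h2 : m ≠ e.1.2) :
    vertexPoly n (toP q) (Function.update c e b) m = vertexPoly n (toP q) c m := by
  refine Finset.prod_congr rfl fun j _ => ?_
  apply spinorOnEdge_update_c
  · intro hc; exact h1 (by rw [hc])
  · intro hc; exact h2 (by rw [hc])

lemma vertexPoly_fst (q : SpinorEdge n → Fin 2 → Polynomial ℂ) (c : SpinorEdge n → Bool)
    (e : SpinorEdge n) :
    vertexPoly n (toP q) c e.1.1
      = q e (if c e then 1 else 0) * rfac q c e.1.1 e.1.2 := by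
  obtain ⟨⟨i, j⟩, hlt⟩ := e
  have hmem : j ∈ Finset.univ.erase i :=
    Finset.mem_erase.2 ⟨(ne_of_lt hlt).symm, Finset.mem_univ j⟩
  show vertexPoly n (toP q) c i = _
  rw [vertexPoly, ← Finset.mul_prod_erase _ _ hmem, spinorOnEdge_lt _ _ hlt, toP_apply _ hlt]
  rfl

lemma vertexPoly_snd (q : SpinorEdge n → Fin 2 → Polynomial ℂ) (c : SpinorEdge n → Bool)
    (e : SpinorEdge n) :
    vertexPoly n (toP q) c e.1.2
      = q e (if c e then 0 else 1) * rfac q c e.1.2 e.1.1 := by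
  obtain ⟨⟨i, j⟩, hlt⟩ := e
  have hmem : i ∈ Finset.univ.erase j :=
    Finset.mem_erase.2 ⟨ne_of_lt hlt, Finset.mem_univ i⟩
  show vertexPoly n (toP q) c j = _
  rw [vertexPoly, ← Finset.mul_prod_erase _ _ hmem, spinorOnEdge_gt _ _ hlt, toP_apply _ hlt]
  rfl

end SvA

namespace SvA

open Matrix

variable {n : ℕ}

noncomputable def Dt (v : Fin n → Polynomial ℂ) : ℂ :=
  Matrix.det (Matrix.of fun m k : Fin n => (v m).coeff (k : ℕ))

noncomputable def det2 (w : Fin 2 → Polynomial ℂ) : ℂ :=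
  (w 0).coeff 0 * (w 1).coeff 1 - (w 0).coeff 1 * (w 1).coeff 0

noncomputable def Ssum (q : SpinorEdge n → Fin 2 → Polynomial ℂ) : ℂ :=
  ∑ c : SpinorEdge n → Bool, spinorSign n c * Dt (vertexPoly n (toP q) c)

noncomputable def dd (q : SpinorEdge n → Fin 2 → Polynomial ℂ) (c : SpinorEdge n → Bool)
    (e : SpinorEdge n) (u v : Polynomial ℂ) : ℂ :=
  Matrix.det (Matrix.of fun m k : Fin n =>
    (if m = e.1.1 then u * rfac q c e.1.1 e.1.2
     else if m = e.1.2 then v * rfac q c e.1.2 e.1.1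
     else vertexPoly n (toP q) c m).coeff (k : ℕ))

lemma Dt_eq_dd (q : SpinorEdge n → Fin 2 → Polynomial ℂ) (c : SpinorEdge n → Bool)
    (e : SpinorEdge n) :
    Dt (vertexPoly n (toP q) c)
      = dd q c e (q e (if c e then 1 else 0)) (q e (if c e then 0 else 1)) := by
  unfold Dt dd
  congr 1
  ext m k
  simp only [Matrix.of_apply]
  congr 1
  by_cases h1 : m = e.1.1
  · subst h1; rw [if_pos rfl, ← vertexPoly_fst]
  · rw [if_neg h1]
    by_cases h2 : m = e.1.2
    · subst h2; rw [if_pos rfl, ← vertexPoly_snd]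
    · rw [if_neg h2]

lemma dd_update_q (q : SpinorEdge n → Fin 2 → Polynomial ℂ) (c : SpinorEdge n → Bool)
    (e : SpinorEdge n) (w : Fin 2 → Polynomial ℂ) (u v : Polynomial ℂ) :
    dd (Function.update q e w) c e u v = dd q c e u v := by
  unfold dd
  congr 1
  ext m k
  simp only [Matrix.of_apply]
  congr 1
  by_cases h1 : m = e.1.1
  · rw [if_pos h1, if_pos h1, rfac_update_q _ _ _ _ (Or.inl (Prod.ext rfl rfl))]
  · rw [if_neg h1, if_neg h1]
    by_cases h2 : m = e.1.2
    · rw [if_pos h2, if_pos h2, rfac_update_q _ _ _ _ (Or.inr (Prod.ext rfl rfl))]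
    · rw [if_neg h2, if_neg h2, vertexPoly_update_q _ _ _ _ h1 h2]

lemma dd_update_c (q : SpinorEdge n → Fin 2 → Polynomial ℂ) (c : SpinorEdge n → Bool)
    (e : SpinorEdge n) (b : Bool) (u v : Polynomial ℂ) :
    dd q (Function.update c e b) e u v = dd q c e u v := by
  unfold dd
  congr 1
  ext m k
  simp only [Matrix.of_apply]
  congr 1
  by_cases h1 : m = e.1.1
  · rw [if_pos h1, if_pos h1, rfac_update_c _ _ _ _ (Or.inl (Prod.ext rfl rfl))]
  · rw [if_neg h1, if_neg h1]
    by_cases h2 : m = e.1.2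
    · rw [if_pos h2, if_pos h2, rfac_update_c _ _ _ _ (Or.inr (Prod.ext rfl rfl))]
    · rw [if_neg h2, if_neg h2, vertexPoly_update_c _ _ _ _ h1 h2]

lemma dd_left (q : SpinorEdge n → Fin 2 → Polynomial ℂ) (c : SpinorEdge n → Bool)
    (e : SpinorEdge n) (a b : ℂ) (u u' v : Polynomial ℂ) :
    dd q c e (a • u + b • u') v = a * dd q c e u v + b * dd q c e u' v := by
  unfold dd
  have hR : ∀ x : Polynomial ℂ,
      (Matrix.of fun m k : Fin n =>
        (if m = e.1.1 then x * rfac q c e.1.1 e.1.2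
         else if m = e.1.2 then v * rfac q c e.1.2 e.1.1
         else vertexPoly n (toP q) c m).coeff (k : ℕ))
      = Matrix.updateRow
          (Matrix.of fun m k : Fin n =>
            (if m = e.1.1 then 0
             else if m = e.1.2 then v * rfac q c e.1.2 e.1.1
             else vertexPoly n (toP q) c m).coeff (k : ℕ))
          e.1.1 (fun k => (x * rfac q c e.1.1 e.1.2).coeff (k : ℕ)) := by
    intro x
    ext m k
    rw [Matrix.updateRow_apply]
    by_cases h1 : m = e.1.1 <;> simp [h1]
  rw [hR, hR, hR]
  have hrow : (fun k : Fin n => ((a • u + b • u') * rfac q c e.1.1 e.1.2).coeff (k : ℕ))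
      = a • (fun k : Fin n => (u * rfac q c e.1.1 e.1.2).coeff (k : ℕ))
        + b • (fun k : Fin n => (u' * rfac q c e.1.1 e.1.2).coeff (k : ℕ)) := by
    funext k
    simp [add_mul, smul_mul_assoc, Polynomial.coeff_smul, smul_eq_mul]
  rw [hrow, Matrix.det_updateRow_add, Matrix.det_updateRow_smul, Matrix.det_updateRow_smul]

lemma dd_right (q : SpinorEdge n → Fin 2 → Polynomial ℂ) (c : SpinorEdge n → Bool)
    (e : SpinorEdge n) (a b : ℂ) (u v v' : Polynomial ℂ) :
    dd q c e u (a • v + b • v') = a * dd q c e u v + b * dd q c e u v' := by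
  unfold dd
  have hne : e.1.2 ≠ e.1.1 := (ne_of_lt e.2).symm
  have hR : ∀ x : Polynomial ℂ,
      (Matrix.of fun m k : Fin n =>
        (if m = e.1.1 then u * rfac q c e.1.1 e.1.2
         else if m = e.1.2 then x * rfac q c e.1.2 e.1.1
         else vertexPoly n (toP q) c m).coeff (k : ℕ))
      = Matrix.updateRow
          (Matrix.of fun m k : Fin n =>
            (if m = e.1.1 then u * rfac q c e.1.1 e.1.2
             else if m = e.1.2 then 0
             else vertexPoly n (toP q) c m).coeff (k : ℕ))
          e.1.2 (fun k => (x * rfac q c e.1.2 e.1.1).coeff (k : ℕ)) := by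
    intro x
    ext m k
    rw [Matrix.updateRow_apply]
    by_cases h2 : m = e.1.2
    · subst h2; simp [hne]
    · simp [h2]
  rw [hR, hR, hR]
  have hrow : (fun k : Fin n => ((a • v + b • v') * rfac q c e.1.2 e.1.1).coeff (k : ℕ))
      = a • (fun k : Fin n => (v * rfac q c e.1.2 e.1.1).coeff (k : ℕ))
        + b • (fun k : Fin n => (v' * rfac q c e.1.2 e.1.1).coeff (k : ℕ)) := by
    funext k
    simp [add_mul, smul_mul_assoc, Polynomial.coeff_smul, smul_eq_mul]
  rw [hrow, Matrix.det_updateRow_add, Matrix.det_updateRow_smul, Matrix.det_updateRow_smul]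

end SvA

namespace SvA

open Matrix

variable {n : ℕ}

lemma spinorSign_update_true (c : SpinorEdge n → Bool) (e : SpinorEdge n) (hce : c e = false) :
    spinorSign n (Function.update c e true) = - spinorSign n c := by
  unfold spinorSign
  have h1 : ∀ x ∈ Finset.univ.erase e,
      (if Function.update c e true x then (-1 : ℂ) else 1) = (if c x then -1 else 1) := by
    intro x hx
    rw [Function.update_of_ne (Finset.mem_erase.1 hx).1]
  rw [← Finset.prod_erase_mul _ _ (Finset.mem_univ e),
      ← Finset.prod_erase_mul _ _ (Finset.mem_univ e),
      Finset.prod_congr rfl h1, Function.update_self, hce]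
  simp

lemma sum_pairs (e : SpinorEdge n) (F : (SpinorEdge n → Bool) → ℂ) :
    ∑ c : SpinorEdge n → Bool, F c
      = ∑ c ∈ Finset.univ.filter (fun c : SpinorEdge n → Bool => c e = false),
          (F c + F (Function.update c e true)) := by
  classical
  rw [Finset.sum_add_distrib,
    ← Finset.sum_filter_add_sum_filter_not Finset.univ (fun c : SpinorEdge n → Bool => c e = false) F]
  congr 1
  refine Finset.sum_bij' (i := fun c _ => Function.update c e false)
    (j := fun c _ => Function.update c e true) ?_ ?_ ?_ ?_ ?_
  · intro a ha
    simp [Function.update_self]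
  · intro b hb
    simp only [Finset.mem_filter, Finset.mem_univ, true_and] at hb ⊢
    simp [Function.update_self]
  · intro a ha
    simp only [Finset.mem_filter, Finset.mem_univ, true_and] at ha
    have : a e = true := by
      cases hae : a e
      · exact absurd hae ha
      · rfl
    show Function.update (Function.update a e false) e true = a
    rw [Function.update_idem, ← this, Function.update_eq_self]
  · intro b hb
    simp only [Finset.mem_filter, Finset.mem_univ, true_and] at hb
    show Function.update (Function.update b e true) e false = b
    rw [Function.update_idem, ← hb, Function.update_eq_self]
  · intro a ha
    simp only [Finset.mem_filter, Finset.mem_univ, true_and] at ha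
    have : a e = true := by
      cases hae : a e
      · exact absurd hae ha
      · rfl
    show F a = F (Function.update (Function.update a e false) e true)
    rw [Function.update_idem, ← this, Function.update_eq_self]

lemma degree_le_one_of_lt_two {p : Polynomial ℂ} (h : p.degree < 2) : p.degree ≤ 1 := by
  by_contra hc
  push_neg at hc
  have h2 : (1 : WithBot ℕ) + 1 ≤ p.degree := Nat.WithBot.add_one_le_of_lt hc
  rw [one_add_one_eq_two] at h2
  exact absurd h (not_lt.2 h2)

lemma decomp_of_deg_lt_two {p : Polynomial ℂ} (h : p.degree < 2) :
    p = p.coeff 1 • X + p.coeff 0 • (1 : Polynomial ℂ) := by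
  conv_lhs => rw [Polynomial.eq_X_add_C_of_degree_le_one (degree_le_one_of_lt_two h)]
  rw [Polynomial.smul_eq_C_mul, Polynomial.smul_eq_C_mul, mul_one]

end SvA

namespace SvA

open Matrix

variable {n : ℕ}

lemma step (q : SpinorEdge n → Fin 2 → Polynomial ℂ) (e : SpinorEdge n)
    (h0 : (q e 0).degree < 2) (h1 : (q e 1).degree < 2) :
    Ssum q = det2 (q e) * Ssum (Function.update q e ![1, X]) := by
  classical
  unfold Ssum
  rw [sum_pairs e, sum_pairs e (F := fun c => spinorSign n c *
        Dt (vertexPoly n (toP (Function.update q e ![(1 : Polynomial ℂ), X])) c)),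
      Finset.mul_sum]
  refine Finset.sum_congr rfl fun c hc => ?_
  have hce : c e = false := (Finset.mem_filter.1 hc).2
  have hone : (Function.update c e true) e = true := Function.update_self _ _ _
  rw [Dt_eq_dd q c e, Dt_eq_dd q (Function.update c e true) e,
      Dt_eq_dd (Function.update q e ![1, X]) c e,
      Dt_eq_dd (Function.update q e ![1, X]) (Function.update c e true) e,
      spinorSign_update_true c e hce]
  simp only [hce, hone, Function.update_self, dd_update_c, dd_update_q,
    Bool.false_eq_true, if_false, if_true, Matrix.cons_val_zero, Matrix.cons_val_one,
    Matrix.head_cons]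
  simp only [det2]
  set a0 := (q e 0).coeff 0 with ha0
  set a1 := (q e 0).coeff 1 with ha1
  set b0 := (q e 1).coeff 0 with hb0
  set b1 := (q e 1).coeff 1 with hb1
  have hu : q e 0 = a1 • X + a0 • (1 : Polynomial ℂ) := by
    rw [ha1, ha0]; exact decomp_of_deg_lt_two h0
  have hv : q e 1 = b1 • X + b0 • (1 : Polynomial ℂ) := by
    rw [hb1, hb0]; exact decomp_of_deg_lt_two h1
  rw [hu, hv]
  simp only [dd_left, dd_right]
  ring

lemma steps (q : SpinorEdge n → Fin 2 → Polynomial ℂ)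
    (hq : ∀ (e : SpinorEdge n) (k : Fin 2), (q e k).degree < 2) (s : Finset (SpinorEdge n)) :
    Ssum q = (∏ e ∈ s, det2 (q e)) * Ssum (fun e => if e ∈ s then ![1, X] else q e) := by
  classical
  induction s using Finset.induction_on with
  | empty => simp
  | @insert e s he ih =>
    rw [ih, Finset.prod_insert he]
    have h0 : ((fun e' => if e' ∈ s then ![(1 : Polynomial ℂ), X] else q e') e 0).degree < 2 := by
      simp only [if_neg he]; exact hq e 0
    have h1 : ((fun e' => if e' ∈ s then ![(1 : Polynomial ℂ), X] else q e') e 1).degree < 2 := by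
      simp only [if_neg he]; exact hq e 1
    rw [step _ e h0 h1]
    have h2 : Function.update (fun e' => if e' ∈ s then ![(1 : Polynomial ℂ), X] else q e') e
          ![1, X]
        = fun e' => if e' ∈ insert e s then ![1, X] else q e' := by
      funext e'
      by_cases h : e' = e
      · subst h; rw [Function.update_self, if_pos (Finset.mem_insert_self _ _)]
      · rw [Function.update_of_ne h]
        by_cases hs : e' ∈ s
        · rw [if_pos hs, if_pos (Finset.mem_insert_of_mem hs)]
        · rw [if_neg hs, if_neg (by simp [h, hs])]
    rw [h2, if_neg he]
    ring

end SvA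

namespace SvA

open Matrix

variable {n : ℕ}

noncomputable def stdq : SpinorEdge n → Fin 2 → Polynomial ℂ := fun _ => ![1, X]

def beats (c : SpinorEdge n → Bool) (i j : Fin n) : Bool :=
  if h : i < j then c ⟨(i, j), h⟩ else if h : j < i then !c ⟨(j, i), h⟩ else false

lemma beats_self (c : SpinorEdge n → Bool) (i : Fin n) : beats c i i = false := by
  rw [beats, dif_neg (lt_irrefl i), dif_neg (lt_irrefl i)]

lemma beats_of_lt (c : SpinorEdge n → Bool) {i j : Fin n} (h : i < j) :
    beats c i j = c ⟨(i, j), h⟩ := dif_pos h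

lemma beats_of_gt (c : SpinorEdge n → Bool) {i j : Fin n} (h : i < j) :
    beats c j i = !c ⟨(i, j), h⟩ := by
  rw [beats, dif_neg (lt_asymm h), dif_pos h]

lemma beats_swap (c : SpinorEdge n → Bool) {i j : Fin n} (hne : i ≠ j) :
    beats c j i = !(beats c i j) := by
  rcases hne.lt_or_gt with h | h
  · rw [beats_of_gt c h, beats_of_lt c h]
  · rw [beats_of_lt c h, beats_of_gt c h, Bool.not_not]

lemma spinorOnEdge_stdq (c : SpinorEdge n → Bool) {i j : Fin n} (hne : i ≠ j) :
    spinorOnEdge n (toP stdq) c i j = if beats c i j then X else 1 := by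
  rcases hne.lt_or_gt with h | h
  · rw [spinorOnEdge_lt _ _ h, toP_apply _ h, beats_of_lt c h]
    cases hce : c ⟨(i, j), h⟩ <;> simp [stdq]
  · rw [spinorOnEdge_gt _ _ h, toP_apply _ h, beats_of_gt c h]
    cases hce : c ⟨(j, i), h⟩ <;> simp [stdq]

def ddeg (c : SpinorEdge n → Bool) (m : Fin n) : ℕ :=
  ((Finset.univ.erase m).filter fun j => beats c m j = true).card

lemma vertexPoly_stdq (c : SpinorEdge n → Bool) (m : Fin n) :
    vertexPoly n (toP stdq) c m = X ^ ddeg c m := by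
  rw [vertexPoly,
    Finset.prod_congr rfl fun j hj =>
      spinorOnEdge_stdq c (Ne.symm (Finset.mem_erase.1 hj).1)]
  rw [Finset.prod_ite, Finset.prod_const, Finset.prod_const_one, mul_one, ddeg]

lemma ddeg_lt (c : SpinorEdge n → Bool) (m : Fin n) : ddeg c m < n := by
  have h1 : ddeg c m ≤ (Finset.univ.erase m).card := Finset.card_filter_le _ _
  have h2 : (Finset.univ.erase m).card = n - 1 := by
    rw [Finset.card_erase_of_mem (Finset.mem_univ m), Finset.card_univ, Fintype.card_fin]
  have h3 : 0 < n := m.pos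
  omega

def wfun (c : SpinorEdge n → Bool) (m j' : Fin n) : ℕ :=
  if j' ≠ m ∧ beats c m j' = true then 1 else 0

lemma ddeg_eq_sum (c : SpinorEdge n → Bool) (m : Fin n) :
    ddeg c m = ∑ j : Fin n, wfun c m j := by
  unfold wfun
  classical
  rw [ddeg, Finset.card_filter]
  rw [show ((Finset.univ.erase m) : Finset (Fin n)) = Finset.univ.filter (fun j => j ≠ m) from by
    ext j; simp [Finset.mem_erase]]
  rw [Finset.sum_filter]
  refine Finset.sum_congr rfl fun j _ => ?_
  by_cases h1 : j = m
  · subst h1; simp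
  · simp [h1]

end SvA

namespace SvA

open Matrix

variable {n : ℕ}

lemma wfun_add_swap (c : SpinorEdge n → Bool) {m j' : Fin n} (h : m ≠ j') :
    wfun c m j' + wfun c j' m = 1 := by
  have hb2 : beats c j' m = !beats c m j' := beats_swap c h
  unfold wfun
  cases hbm : beats c m j' <;>
    rw [hbm] at hb2 <;>
    simp [hbm, hb2, h, Ne.symm h]

lemma not_lt_of_beats (c : SpinorEdge n → Bool) (hinj : Function.Injective (ddeg c))
    {i j : Fin n} (hne : i ≠ j) (hb : beats c i j = true) :
    ¬ ddeg c i < ddeg c j := by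
  classical
  intro hlt
  have hinj' : Function.Injective (fun m : Fin n => (⟨ddeg c m, ddeg_lt c m⟩ : Fin n)) :=
    fun a b hab => hinj (congrArg Fin.val hab)
  have hbij := Finite.injective_iff_bijective.1 hinj'
  set σe : Equiv.Perm (Fin n) := Equiv.ofBijective _ hbij with hσe
  have hσ : ∀ m, (σe m : ℕ) = ddeg c m := fun m => rfl
  set A : Finset (Fin n) := Finset.univ.filter (fun m => ddeg c m < ddeg c j) with hA
  have hiA : i ∈ A := by simp [hA, hlt]
  have hjA : j ∉ A := by simp [hA]
  -- sum over A of degrees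
  have hsymmval : ∀ (l : ℕ) (hl : l < n), ddeg c (σe.symm ⟨l, hl⟩) = l := by
    intro l hl
    have := hσ (σe.symm ⟨l, hl⟩)
    rw [Equiv.apply_symm_apply] at this
    exact this.symm
  have hAsum : ∑ m ∈ A, ddeg c m = ∑ l ∈ Finset.range (ddeg c j), l := by
    refine Finset.sum_bij' (i := fun m _ => ddeg c m)
      (j := fun l hl => σe.symm ⟨l, lt_trans (Finset.mem_range.1 hl) (ddeg_lt c j)⟩)
      ?_ ?_ ?_ ?_ ?_
    · intro a ha
      exact Finset.mem_range.2 ((Finset.mem_filter.1 ha).2)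
    · intro l hl
      refine Finset.mem_filter.2 ⟨Finset.mem_univ _, ?_⟩
      rw [hsymmval]
      exact Finset.mem_range.1 hl
    · intro a ha
      have : (⟨ddeg c a, ddeg_lt c a⟩ : Fin n) = σe a := Fin.ext (hσ a).symm
      simp only [this]
      exact σe.symm_apply_apply a
    · intro l hl
      exact hsymmval _ _
    · intro a ha
      rfl
  have hAcard : A.card = ddeg c j := by
    have : (Finset.range (ddeg c j)).card = ddeg c j := Finset.card_range _
    rw [← this]
    refine Finset.card_bij' (i := fun m _ => ddeg c m)
      (j := fun l hl => σe.symm ⟨l, lt_trans (Finset.mem_range.1 hl) (ddeg_lt c j)⟩)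
      ?_ ?_ ?_ ?_
    · intro a ha
      exact Finset.mem_range.2 ((Finset.mem_filter.1 ha).2)
    · intro l hl
      refine Finset.mem_filter.2 ⟨Finset.mem_univ _, ?_⟩
      rw [hsymmval]
      exact Finset.mem_range.1 hl
    · intro a ha
      have : (⟨ddeg c a, ddeg_lt c a⟩ : Fin n) = σe a := Fin.ext (hσ a).symm
      simp only [this]
      exact σe.symm_apply_apply a
    · intro l hl
      exact hsymmval _ _
  -- strict inequality
  have hTlt : (∑ m ∈ A, ∑ j' ∈ A, wfun c m j') < ∑ m ∈ A, ddeg c m := by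
    refine Finset.sum_lt_sum ?_ ⟨i, hiA, ?_⟩
    · intro m _
      rw [ddeg_eq_sum]
      exact Finset.sum_le_sum_of_subset (Finset.subset_univ A)
    · rw [ddeg_eq_sum]
      calc ∑ j' ∈ A, wfun c i j' < ∑ j' ∈ insert j A, wfun c i j' := by
            rw [Finset.sum_insert hjA]
            have h1 : wfun c i j = 1 := if_pos ⟨Ne.symm hne, hb⟩
            omega
        _ ≤ ∑ j' : Fin n, wfun c i j' := Finset.sum_le_sum_of_subset (Finset.subset_univ _)
  -- doubling
  have hdouble : 2 * (∑ m ∈ A, ∑ j' ∈ A, wfun c m j') + A.card = A.card * A.card := by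
    have hswap : ∑ m ∈ A, ∑ j' ∈ A, (wfun c m j' + wfun c j' m)
        = ∑ m ∈ A, ∑ j' ∈ A, (if j' ≠ m then 1 else 0) := by
      refine Finset.sum_congr rfl fun m _ => Finset.sum_congr rfl fun j' _ => ?_
      by_cases hmj : j' = m
      · subst hmj; simp [wfun]
      · rw [wfun_add_swap c (Ne.symm hmj), if_pos hmj]
    have hcount : ∀ m ∈ A, (∑ j' ∈ A, (if j' ≠ m then 1 else 0)) + 1 = A.card := by
      intro m hm
      have h1 : ∑ j' ∈ A, ((if j' ≠ m then (1 : ℕ) else 0) + (if j' = m then 1 else 0))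
          = A.card := by
        rw [show (A.card : ℕ) = ∑ _j' ∈ A, 1 from by simp]
        refine Finset.sum_congr rfl fun j' _ => ?_
        by_cases hj' : j' = m <;> simp [hj']
      rw [Finset.sum_add_distrib] at h1
      have h2 : ∑ j' ∈ A, (if j' = m then (1 : ℕ) else 0) = 1 := by
        rw [Finset.sum_ite_eq' A m (fun _ => (1 : ℕ)), if_pos hm]
      omega
    have hLHS : ∑ m ∈ A, ∑ j' ∈ A, (wfun c m j' + wfun c j' m)
        = 2 * (∑ m ∈ A, ∑ j' ∈ A, wfun c m j') := by
      simp only [Finset.sum_add_distrib]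
      rw [Finset.sum_comm (s := A) (t := A) (f := fun m j' => wfun c j' m)]
      ring
    have hfin : ∑ m ∈ A, ((∑ j' ∈ A, (if j' ≠ m then (1 : ℕ) else 0)) + 1)
        = A.card * A.card := by
      rw [Finset.sum_congr rfl hcount, Finset.sum_const, smul_eq_mul]
    rw [Finset.sum_add_distrib, Finset.sum_const, smul_eq_mul, mul_one] at hfin
    have hmain : ∑ m ∈ A, ∑ j' ∈ A, (if j' ≠ m then (1 : ℕ) else 0)
        = 2 * (∑ m ∈ A, ∑ j' ∈ A, wfun c m j') := hswap.symm.trans hLHS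
    omega
  -- final contradiction
  have hG : (∑ l ∈ Finset.range (ddeg c j), l) * 2 = ddeg c j * (ddeg c j - 1) :=
    Finset.sum_range_id_mul_two _
  have hk1 : ddeg c j * (ddeg c j - 1) + ddeg c j = ddeg c j * ddeg c j := by
    have : ∀ d : ℕ, d * (d - 1) + d = d * d := by
      intro d
      cases d with
      | zero => rfl
      | succ m => simp [Nat.succ_sub_one]; ring
    exact this _
  have e1 : 2 * (∑ m ∈ A, ∑ j' ∈ A, wfun c m j') + ddeg c j = ddeg c j * ddeg c j := by
    rw [← hAcard]; exact hdouble
  have e2 : (∑ l ∈ Finset.range (ddeg c j), l) * 2 + ddeg c j = ddeg c j * ddeg c j := by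
    rw [hG]; exact hk1
  have e3 : (∑ m ∈ A, ∑ j' ∈ A, wfun c m j') < ∑ l ∈ Finset.range (ddeg c j), l := by
    rw [← hAsum]; exact hTlt
  have e4 : 2 * (∑ m ∈ A, ∑ j' ∈ A, wfun c m j') + ddeg c j
      = (∑ l ∈ Finset.range (ddeg c j), l) * 2 + ddeg c j := e1.trans e2.symm
  clear e1 e2 hG hk1 hdouble hAcard hAsum hTlt
  omega

end SvA

namespace SvA

open Matrix

variable {n : ℕ}

lemma sign_eq_signAux {m : ℕ} (f : Equiv.Perm (Fin m)) :
    Equiv.Perm.sign f = Equiv.Perm.signAux f := by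
  have key : ∀ l : List (Equiv.Perm (Fin m)), (∀ g ∈ l, Equiv.Perm.IsSwap g) →
      Equiv.Perm.sign l.prod = Equiv.Perm.signAux l.prod := by
    intro l
    induction l with
    | nil => intro _; simp [Equiv.Perm.signAux_one]
    | cons g t ih =>
      intro hsw
      obtain ⟨x, y, hxy, hg⟩ := hsw g (List.mem_cons_self (a := g) (l := t))
      rw [List.prod_cons, Equiv.Perm.sign_mul, Equiv.Perm.signAux_mul,
        ih (fun z hz => hsw z (List.mem_cons_of_mem _ hz)), hg,
        Equiv.Perm.sign_swap hxy, Equiv.Perm.signAux_swap hxy]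
  obtain ⟨l, hl, hsw⟩ := (Equiv.Perm.truncSwapFactors f).out
  rw [← hl]
  exact key l hsw

lemma spinorSign_eq_sign (c : SpinorEdge n → Bool) (σe : Equiv.Perm (Fin n))
    (hc : ∀ e : SpinorEdge n, (c e = true) ↔ σe e.1.2 < σe e.1.1) :
    spinorSign n c = ((Equiv.Perm.sign σe : ℤ) : ℂ) := by
  rw [sign_eq_signAux]
  have hcast : ((Equiv.Perm.signAux σe : ℤ) : ℂ)
      = ∏ x ∈ Equiv.Perm.finPairsLT n, (if σe x.1 ≤ σe x.2 then (-1 : ℂ) else 1) := by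
    set φ : ℤˣ →* ℂ := (Int.castRingHom ℂ).toMonoidHom.comp (Units.coeHom ℤ) with hφ
    have h1 : ((Equiv.Perm.signAux σe : ℤ) : ℂ)
        = φ (∏ x ∈ Equiv.Perm.finPairsLT n, if σe x.1 ≤ σe x.2 then (-1 : ℤˣ) else 1) := rfl
    rw [h1, map_prod]
    refine Finset.prod_congr rfl fun x _ => ?_
    split_ifs <;> simp [hφ]
  rw [hcast, spinorSign]
  refine Finset.prod_bij' (i := fun (e : SpinorEdge n) _ => (⟨e.1.2, e.1.1⟩ : Σ _ : Fin n, Fin n))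
    (j := fun x hx => (⟨(x.2, x.1), Equiv.Perm.mem_finPairsLT.1 hx⟩ : SpinorEdge n))
    ?_ ?_ ?_ ?_ ?_
  · intro e _
    exact Equiv.Perm.mem_finPairsLT.2 e.2
  · intro x _
    exact Finset.mem_univ _
  · intro e _
    exact Subtype.ext rfl
  · intro x _
    rfl
  · intro e _
    have hne : σe e.1.2 ≠ σe e.1.1 := σe.injective.ne (ne_of_lt e.2).symm
    by_cases hce : c e = true
    · rw [if_pos hce, if_pos (le_of_lt ((hc e).1 hce))]
    · have hnlt : ¬ σe e.1.2 < σe e.1.1 := fun hlt => hce ((hc e).2 hlt)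
      rw [if_neg hce, if_neg (fun hle => hnlt (lt_of_le_of_ne hle hne))]

lemma term_eq (c : SpinorEdge n → Bool) :
    spinorSign n c * Dt (vertexPoly n (toP stdq) c)
      = if Function.Injective (ddeg c) then 1 else 0 := by
  classical
  rw [show vertexPoly n (toP stdq) c = fun m => X ^ ddeg c m from funext (vertexPoly_stdq c)]
  by_cases hinj : Function.Injective (ddeg c)
  · rw [if_pos hinj]
    have hinj' : Function.Injective (fun m : Fin n => (⟨ddeg c m, ddeg_lt c m⟩ : Fin n)) :=
      fun a b hab => hinj (congrArg Fin.val hab)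
    have hbij := Finite.injective_iff_bijective.1 hinj'
    set σe : Equiv.Perm (Fin n) := Equiv.ofBijective _ hbij with hσe
    have hσ : ∀ m, (σe m : ℕ) = ddeg c m := fun m => rfl
    have hiff : ∀ i j : Fin n, i ≠ j → (beats c i j = true ↔ ddeg c j < ddeg c i) := by
      intro i j hne
      constructor
      · intro hb
        have hne' : ddeg c i ≠ ddeg c j := fun h => hne (hinj h)
        rcases lt_or_gt_of_ne hne' with h | h
        · exact absurd h (not_lt_of_beats c hinj hne hb)
        · exact h
      · intro hlt
        by_contra hbn
        have hbf : beats c i j = false := by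
          cases hbe : beats c i j
          · rfl
          · exact absurd hbe hbn
        have : beats c j i = true := by
          rw [beats_swap c hne, hbf]; rfl
        exact not_lt_of_beats c hinj (Ne.symm hne) this hlt
    have hdet : Dt (fun m : Fin n => (X : Polynomial ℂ) ^ ddeg c m)
        = ((Equiv.Perm.sign σe : ℤ) : ℂ) := by
      rw [Dt]
      have hM : (Matrix.of fun m k : Fin n => ((X : Polynomial ℂ) ^ ddeg c m).coeff (k : ℕ))
          = σe.permMatrix ℂ := by
        ext m k
        rw [Matrix.of_apply, Polynomial.coeff_X_pow]
        rw [show (Equiv.Perm.permMatrix ℂ σe) m k = if k ∈ σe.toPEquiv m then 1 else 0 from rfl]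
        rw [Equiv.toPEquiv_apply]
        have : (k ∈ (some (σe m) : Option (Fin n))) ↔ ((k : ℕ) = ddeg c m) := by
          rw [Option.mem_some_iff]
          constructor
          · intro h; rw [← h]; exact (hσ m)
          · intro h; exact Fin.ext ((hσ m).trans h.symm)
        rw [if_congr this rfl rfl]
      rw [hM, Matrix.det_permutation]
    have hsign : spinorSign n c = ((Equiv.Perm.sign σe : ℤ) : ℂ) := by
      refine spinorSign_eq_sign c σe fun e => ?_
      have h1 : beats c e.1.1 e.1.2 = c e := by
        rw [beats_of_lt c e.2]
      rw [← h1, hiff _ _ (ne_of_lt e.2)]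
      constructor
      · intro h; exact (Fin.lt_def).2 (by rw [hσ, hσ]; exact h)
      · intro h; have := (Fin.lt_def).1 h; rw [hσ, hσ] at this; exact this
    rw [hdet, hsign]
    rcases Int.units_eq_one_or (Equiv.Perm.sign σe) with h | h <;> rw [h] <;> norm_num
  · rw [if_neg hinj]
    have : ∃ a b : Fin n, ddeg c a = ddeg c b ∧ a ≠ b := by
      unfold Function.Injective at hinj
      push_neg at hinj
      exact hinj
    obtain ⟨a, b, hab, hne⟩ := this
    have hdet : Dt (fun m : Fin n => (X : Polynomial ℂ) ^ ddeg c m) = 0 := by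
      rw [Dt]
      refine Matrix.det_zero_of_row_eq hne ?_
      funext k
      rw [Matrix.of_apply, Matrix.of_apply, hab]
    rw [hdet, mul_zero]

end SvA

namespace SvA

open Matrix

variable {n : ℕ}

lemma card_filter_lt (m : Fin n) :
    (Finset.univ.filter fun j : Fin n => j < m).card = (m : ℕ) := by
  rw [show (Finset.univ.filter fun j : Fin n => j < m) = Finset.Iio m from by
    ext j; simp]
  exact Fin.card_Iio m

lemma ddeg_false (m : Fin n) : ddeg (fun _ : SpinorEdge n => false) m = (m : ℕ) := by
  have hb : ∀ j : Fin n, beats (fun _ : SpinorEdge n => false) m j = true ↔ j < m := by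
    intro j
    rcases lt_trichotomy m j with h | h | h
    · rw [beats_of_lt _ h]
      simp [lt_asymm h]
    · subst h
      rw [beats_self]
      simp
    · rw [beats_of_gt _ h]
      simp [h]
  rw [ddeg, show ((Finset.univ.erase m).filter
      fun j => beats (fun _ : SpinorEdge n => false) m j = true)
      = Finset.univ.filter fun j : Fin n => j < m from by
    ext j
    constructor
    · intro hj
      exact Finset.mem_filter.2 ⟨Finset.mem_univ j, (hb j).1 (Finset.mem_filter.1 hj).2⟩
    · intro hj
      have hjm : j < m := (Finset.mem_filter.1 hj).2
      exact Finset.mem_filter.2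
        ⟨Finset.mem_erase.2 ⟨ne_of_lt hjm, Finset.mem_univ j⟩, (hb j).2 hjm⟩]
  exact card_filter_lt m

lemma Ssum_stdq_ne_zero : Ssum (stdq (n := n)) ≠ 0 := by
  classical
  unfold Ssum
  rw [Finset.sum_congr rfl fun c _ => term_eq c, Finset.sum_boole]
  rw [Nat.cast_ne_zero]
  refine Finset.card_ne_zero_of_mem (a := fun _ => false) ?_
  refine Finset.mem_filter.2 ⟨Finset.mem_univ _, ?_⟩
  intro a b hab
  rw [ddeg_false, ddeg_false] at hab
  exact Fin.ext hab

lemma coeff_sum_smul {N : ℕ} (g : Fin N → ℂ) (v : Fin N → Polynomial ℂ) (k : ℕ) :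
    (∑ a, g a • v a).coeff k = ∑ a, g a * (v a).coeff k := by
  rw [Polynomial.finset_sum_coeff]
  exact Finset.sum_congr rfl fun a _ => by rw [Polynomial.coeff_smul, smul_eq_mul]

lemma det2_ne_zero {w : Fin 2 → Polynomial ℂ} (hdeg : ∀ k, (w k).degree < 2)
    (hli : LinearIndependent ℂ w) : det2 w ≠ 0 := by
  intro h0
  have hdet : (Matrix.of fun a b : Fin 2 => (w a).coeff (b : ℕ)).det = 0 := by
    rw [Matrix.det_fin_two]
    simpa [det2] using h0
  obtain ⟨g, hg0, hgeq⟩ := Matrix.exists_vecMul_eq_zero_iff.2 hdet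
  have hcomb : ∑ a : Fin 2, g a • w a = 0 := by
    apply Polynomial.ext
    intro k
    rw [coeff_sum_smul, Polynomial.coeff_zero]
    by_cases hk : k < 2
    · have := congrFun hgeq ⟨k, hk⟩
      simpa [Matrix.vecMul, dotProduct] using this
    · push_neg at hk
      have : ∀ a : Fin 2, (w a).coeff k = 0 := fun a =>
        Polynomial.coeff_eq_zero_of_degree_lt
          (lt_of_lt_of_le (hdeg a) (by exact_mod_cast hk))
      simp [this]
  have := Fintype.linearIndependent_iff.1 hli g hcomb
  exact hg0 (funext this)

lemma linearIndependent_of_Dt {v : Fin n → Polynomial ℂ} (h : Dt v ≠ 0) :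
    LinearIndependent ℂ v := by
  rw [Fintype.linearIndependent_iff]
  intro g hg
  by_contra hne
  push_neg at hne
  obtain ⟨i0, hi0⟩ := hne
  apply h
  rw [Dt]
  apply Matrix.exists_vecMul_eq_zero_iff.1
  refine ⟨g, fun hz => hi0 (congrFun hz i0), ?_⟩
  funext k
  have := congrArg (fun p => Polynomial.coeff p (k : ℕ)) hg
  simp only [Polynomial.coeff_zero] at this
  rw [coeff_sum_smul] at this
  simpa [Matrix.vecMul, dotProduct] using this

end SvA

/-- Given, for each unordered pair `{i, j}` with `i < j`, a basis `(p i j 0, p i j 1)` of the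
space `ℂ[t]_{<2}`, there exists an assignment of spinors `c` for which the `n` vertex
polynomials `p^c_i = ∏_{j ≠ i} p^c_{ij}` are linearly independent over `ℂ`. -/
theorem exists_spinor_assignment_linearIndependent
    (hn : 0 < n) (p : Fin n → Fin n → Fin 2 → Polynomial ℂ)
    (hdeg : ∀ i j : Fin n, i < j → ∀ k : Fin 2, (p i j k).degree < 2)
    (hbasis : ∀ i j : Fin n, i < j → LinearIndependent ℂ (p i j)) :
    ∃ c : SpinorEdge n → Bool, LinearIndependent ℂ (vertexPoly n p c) := by
  classical
  set qp : SpinorEdge n → Fin 2 → Polynomial ℂ := fun e k => p e.1.1 e.1.2 k with hqp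
  have hsame : ∀ c, vertexPoly n (SvA.toP qp) c = vertexPoly n p c := fun c =>
    SvA.vertexPoly_congr (fun i j hij k => SvA.toP_apply qp hij k) c
  have hqdeg : ∀ (e : SpinorEdge n) (k : Fin 2), (qp e k).degree < 2 :=
    fun e k => hdeg _ _ e.2 k
  have hS : SvA.Ssum qp = (∏ e : SpinorEdge n, SvA.det2 (qp e)) * SvA.Ssum (SvA.stdq (n := n)) := by
    have h := SvA.steps qp hqdeg Finset.univ
    have h2 : (fun e => if e ∈ (Finset.univ : Finset (SpinorEdge n)) then ![1, X] else qp e)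
        = SvA.stdq (n := n) := by
      funext e
      rw [if_pos (Finset.mem_univ e)]
      rfl
    rw [h, h2]
  have hprod : (∏ e : SpinorEdge n, SvA.det2 (qp e)) ≠ 0 :=
    Finset.prod_ne_zero_iff.2 fun e _ =>
      SvA.det2_ne_zero (fun k => hqdeg e k) (hbasis _ _ e.2)
  have hSne : SvA.Ssum qp ≠ 0 := by
    rw [hS]
    exact mul_ne_zero hprod (SvA.Ssum_stdq_ne_zero (n := n))
  rw [SvA.Ssum] at hSne
  obtain ⟨c, -, hc⟩ := Finset.exists_ne_zero_of_sum_ne_zero hSne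
  refine ⟨c, ?_⟩
  have hDt : SvA.Dt (vertexPoly n p c) ≠ 0 := by
    intro h0
    apply hc
    rw [hsame c, h0, mul_zero]
  exact SvA.linearIndependent_of_Dt hDt
end

section
/- Fix a tournament orientation interpretation: for an assignment c with ⁱʲp_1 = 1, ⁱʲp_2 = t for all i<j, orient edge {i,j} from i to j iff p^c_{ij} = t. Then det(p^c_1, ..., p^c_n) ∈ {−1, 0, +1}, and it is nonzero iff the induced tournament is transitive; when nonzero, sgn(c) · det(p^c_1,...,p^c_n) = +1. -/
open Equiv Finset Polynomial

variable (n : ℕ)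

/-- The tournament induced by an assignment of spinors in the specialization
`ⁱʲp_1 = 1`, `ⁱʲp_2 = t`: the edge `{i, j}` is oriented from `i` to `j` iff the spinor on the
oriented edge `(i, j)` is `t`. -/
def inducedTourRel (c : SpinorEdge n → Bool) (i j : Fin n) : Bool :=
  if h : i < j then c ⟨(i, j), h⟩
  else if h' : j < i then !c ⟨(j, i), h'⟩
  else false

/-- The determinant `det(p^c_1, …, p^c_n)` in the specialization `ⁱʲp_1 = 1`, `ⁱʲp_2 = t`. -/
noncomputable def specDet (c : SpinorEdge n → Bool) : ℂ :=
  (Matrix.of fun r i : Fin n =>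
    (vertexPoly n (fun _ _ k => if k = 0 then 1 else Polynomial.X) c i).coeff r).det

namespace SpecAux

variable {n : ℕ} (c : SpinorEdge n → Bool)

lemma tour_irrefl (i : Fin n) : inducedTourRel n c i i = false := by
  simp [inducedTourRel]

lemma tour_antisymm {i j : Fin n} (h : i ≠ j) :
    inducedTourRel n c j i = !inducedTourRel n c i j := by
  rcases lt_or_gt_of_ne h with h' | h'
  · simp [inducedTourRel, h', h'.asymm, not_lt_of_gt h']
  · simp [inducedTourRel, h', h'.asymm, not_lt_of_gt h']

/-- out-degree -/
def deg (i : Fin n) : ℕ := #(univ.filter fun j => inducedTourRel n c i j = true)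

lemma deg_lt (hn : 0 < n) (i : Fin n) : deg c i < n := by
  have hsub : (univ.filter fun j => inducedTourRel n c i j = true) ⊆ univ.erase i := by
    intro k hk
    rw [mem_filter] at hk
    refine mem_erase.2 ⟨?_, mem_univ _⟩
    rintro rfl
    simp [tour_irrefl] at hk
  have := Finset.card_le_card hsub
  rw [Finset.card_erase_of_mem (mem_univ i), Finset.card_univ, Fintype.card_fin] at this
  unfold deg
  omega

def dF (hn : 0 < n) (i : Fin n) : Fin n := ⟨deg c i, deg_lt c hn i⟩


lemma card_deg_lt (hn : 0 < n) (hinj : Function.Injective (dF c hn)) (i : Fin n) :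
    #(univ.filter fun j : Fin n => deg c j < deg c i) = deg c i := by
  have hbij : Function.Bijective (dF c hn) := Finite.injective_iff_bijective.mp hinj
  have himg : (univ.filter fun j : Fin n => deg c j < deg c i).image (dF c hn)
      = Finset.Iio (dF c hn i) := by
    ext b
    simp only [Finset.mem_image, mem_filter, mem_univ, true_and, Finset.mem_Iio]
    constructor
    · rintro ⟨j, hj, rfl⟩
      exact hj
    · intro hb
      obtain ⟨j, rfl⟩ := hbij.2 b
      exact ⟨j, hb, rfl⟩
  have := congrArg Finset.card himg
  rw [Finset.card_image_of_injective _ hinj, Fin.card_Iio] at this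
  exact this

lemma beats_of_deg_lt (hn : 0 < n) (hinj : Function.Injective (dF c hn)) :
    ∀ m (i j : Fin n), n - deg c i ≤ m → deg c j < deg c i →
      inducedTourRel n c i j = true := by
  intro m
  induction m with
  | zero =>
    intro i j h hlt
    have := deg_lt c hn i
    omega
  | succ m ih =>
    intro i j h hlt
    set A := univ.filter fun k : Fin n => inducedTourRel n c i k = true with hA
    set B := univ.filter fun k : Fin n => deg c k < deg c i with hB
    have hAB : A ⊆ B := by
      intro k hk
      rw [hA, mem_filter] at hk
      have hik : inducedTourRel n c i k = true := hk.2
      have hki : k ≠ i := by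
        rintro rfl
        rw [tour_irrefl] at hik
        exact Bool.false_ne_true hik
      have hdne : deg c k ≠ deg c i := by
        intro he
        exact hki (hinj (Fin.ext he))
      rcases lt_or_gt_of_ne hdne with hlt' | hgt
      · rw [hB, mem_filter]
        exact ⟨mem_univ _, hlt'⟩
      · exfalso
        have hk' : n - deg c k ≤ m := by
          have := deg_lt c hn k
          omega
        have : inducedTourRel n c k i = true := ih k i hk' hgt
        rw [tour_antisymm c hki, this] at hik
        simp at hik
    have hcardA : #A = deg c i := rfl
    have hcardB : #B = deg c i := card_deg_lt c hn hinj i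
    have hEq : A = B := Finset.eq_of_subset_of_card_le hAB (by omega)
    have : j ∈ B := by
      rw [hB, mem_filter]
      exact ⟨mem_univ _, hlt⟩
    rw [← hEq, hA, mem_filter] at this
    exact this.2

lemma tour_iff (hn : 0 < n) (hinj : Function.Injective (dF c hn)) (i j : Fin n) :
    inducedTourRel n c i j = true ↔ deg c j < deg c i := by
  constructor
  · intro hij
    have hne : i ≠ j := by
      rintro rfl
      rw [tour_irrefl] at hij
      exact Bool.false_ne_true hij
    have hdne : deg c j ≠ deg c i := fun he => hne (hinj (Fin.ext he.symm))
    rcases lt_or_gt_of_ne hdne with h | h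
    · exact h
    · exfalso
      have : inducedTourRel n c j i = true :=
        beats_of_deg_lt c hn hinj n j i (by omega) h
      rw [tour_antisymm c hne, hij] at this
      simp at this
  · exact beats_of_deg_lt c hn hinj n i j (by omega)

lemma deg_lt_of_rel (hT : ∀ i j k : Fin n, inducedTourRel n c i j = true →
      inducedTourRel n c j k = true → inducedTourRel n c i k = true)
    {i j : Fin n} (hij : inducedTourRel n c i j = true) : deg c j < deg c i := by
  have hne : i ≠ j := by
    rintro rfl
    rw [tour_irrefl] at hij
    exact Bool.false_ne_true hij
  apply Finset.card_lt_card
  rw [Finset.ssubset_iff_of_subset]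
  · exact ⟨j, by simp [hij], by simp [tour_irrefl]⟩
  · intro k hk
    rw [mem_filter] at hk
    exact mem_filter.2 ⟨mem_univ _, hT i j k hij hk.2⟩

lemma injective_of_transitive (hn : 0 < n)
    (hT : ∀ i j k : Fin n, inducedTourRel n c i j = true →
      inducedTourRel n c j k = true → inducedTourRel n c i k = true) :
    Function.Injective (dF c hn) := by
  intro i j hij
  by_contra hne
  have hd : deg c i = deg c j := congrArg Fin.val hij
  cases hb : inducedTourRel n c i j with
  | true => exact absurd (deg_lt_of_rel c hT hb) (by omega)
  | false =>
    have : inducedTourRel n c j i = true := by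
      rw [tour_antisymm c hne, hb]
      rfl
    exact absurd (deg_lt_of_rel c hT this) (by omega)


lemma sign_eq_signAux : ∀ {N : ℕ} (σ : Perm (Fin N)), Perm.sign σ = Perm.signAux σ := by
  intro N
  match N with
  | 0 =>
    intro σ
    have hσ : σ = 1 := Equiv.ext fun x => x.elim0
    subst hσ
    simp [Perm.signAux_one]
  | 1 =>
    intro σ
    have hσ : σ = 1 := Equiv.ext fun x => Subsingleton.elim _ _
    subst hσ
    simp [Perm.signAux_one]
  | (m+2) =>
    have hsurj : Function.Surjective
        (MonoidHom.mk' (Perm.signAux (n := m+2)) Perm.signAux_mul) := by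
      intro u
      rcases Int.units_eq_one_or u with rfl | rfl
      · exact ⟨1, Perm.signAux_one _⟩
      · exact ⟨Equiv.swap 0 1, Perm.signAux_swap Fin.zero_ne_one⟩
    intro σ
    exact (DFunLike.congr_fun (Perm.eq_sign_of_surjective_hom hsurj) σ).symm

lemma prod_signAux (σ : Perm (Fin n))
    (hcond : ∀ e : SpinorEdge n, (c e = true) ↔ σ e.1.2 ≤ σ e.1.1) :
    (∏ e : SpinorEdge n, (if c e then (-1 : ℂ) else 1)) = ((Perm.signAux σ : ℤ) : ℂ) := by
  have h1 : ((Perm.signAux σ : ℤ) : ℂ)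
      = ∏ x ∈ Perm.finPairsLT n, (if σ x.1 ≤ σ x.2 then (-1 : ℂ) else 1) := by
    rw [Perm.signAux]
    let f : ℤˣ →* ℂ := ((Int.castRingHom ℂ).toMonoidHom).comp (Units.coeHom ℤ)
    have : ((((∏ x ∈ Perm.finPairsLT n,
        if σ x.1 ≤ σ x.2 then (-1 : ℤˣ) else 1) : ℤˣ) : ℤ) : ℂ)
        = f (∏ x ∈ Perm.finPairsLT n, if σ x.1 ≤ σ x.2 then (-1 : ℤˣ) else 1) := rfl
    rw [this, map_prod]
    refine Finset.prod_congr rfl fun x _ => ?_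
    split <;> simp [f]
  rw [h1]
  refine Finset.prod_bij' (fun e _ => (⟨e.1.2, e.1.1⟩ : Σ _ : Fin n, Fin n))
    (fun x hx => (⟨(x.2, x.1), Perm.mem_finPairsLT.1 hx⟩ : SpinorEdge n))
    (fun e _ => Perm.mem_finPairsLT.2 e.2) (fun x hx => Finset.mem_univ _)
    (fun e _ => rfl) (fun x hx => rfl) ?_
  intro e _
  by_cases h : c e = true
  · rw [if_pos h, if_pos ((hcond e).1 h)]
  · rw [if_neg h, if_neg fun hle => h ((hcond e).2 hle)]


lemma spinorOnEdge_eq {i j : Fin n} (hne : j ≠ i) :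
    spinorOnEdge n (fun _ _ k => if k = 0 then 1 else Polynomial.X) c i j
      = if inducedTourRel n c i j = true then Polynomial.X else 1 := by
  rcases lt_or_gt_of_ne (Ne.symm hne) with h | h
  · cases hce : c ⟨(i, j), h⟩ <;>
      simp [spinorOnEdge, inducedTourRel, h, hce]
  · cases hce : c ⟨(j, i), h⟩ <;>
      simp [spinorOnEdge, inducedTourRel, h, hce, not_lt_of_gt h]

lemma vertexPoly_eq (i : Fin n) :
    vertexPoly n (fun _ _ k => if k = 0 then 1 else Polynomial.X) c i
      = Polynomial.X ^ deg c i := by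
  rw [vertexPoly,
    Finset.prod_congr rfl (fun j hj => spinorOnEdge_eq c (Finset.mem_erase.1 hj).1),
    Finset.prod_ite, Finset.prod_const, Finset.prod_const, one_pow, mul_one]
  have hfe : (Finset.univ.erase i).filter (fun j => inducedTourRel n c i j = true)
      = Finset.univ.filter (fun j => inducedTourRel n c i j = true) := by
    ext k
    simp only [Finset.mem_filter, Finset.mem_erase, Finset.mem_univ, and_true, true_and]
    constructor
    · rintro ⟨-, hk⟩; exact hk
    · intro hk
      refine ⟨?_, hk⟩
      rintro rfl
      rw [tour_irrefl] at hk
      exact Bool.false_ne_true hk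
  rw [hfe]
  rfl

end SpecAux

/-- In the specialization `ⁱʲp_1 = 1`, `ⁱʲp_2 = t`, the determinant `det(p^c_1, …, p^c_n)`
lies in `{-1, 0, 1}`; it is nonzero iff the induced tournament is transitive, and whenever it
is nonzero one has `sgn(c) · det = 1`. -/
theorem specialized_det_tournament (hn : 0 < n) (c : SpinorEdge n → Bool) :
    (specDet n c = 1 ∨ specDet n c = 0 ∨ specDet n c = -1) ∧
    (specDet n c ≠ 0 ↔
      ∀ i j k : Fin n, inducedTourRel n c i j = true → inducedTourRel n c j k = true →
        inducedTourRel n c i k = true) ∧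
    (specDet n c ≠ 0 → spinorSign n c * specDet n c = 1) := by
  classical
  by_cases hinj : Function.Injective (SpecAux.dF c hn)
  · -- injective degree map: transitive tournament
    have hbij : Function.Bijective (SpecAux.dF c hn) :=
      Finite.injective_iff_bijective.mp hinj
    set σ : Equiv.Perm (Fin n) := Equiv.ofBijective _ hbij with hσ
    have hσapp : ∀ i, σ i = SpecAux.dF c hn i := fun i => rfl
    have hM : (Matrix.of fun r i : Fin n =>
        (vertexPoly n (fun _ _ k => if k = 0 then 1 else Polynomial.X) c i).coeff r)
        = (σ.permMatrix ℂ).transpose := by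
      ext r i
      simp only [Matrix.of_apply, SpecAux.vertexPoly_eq, Polynomial.coeff_X_pow,
        Matrix.transpose_apply, Equiv.Perm.permMatrix, PEquiv.toMatrix_apply,
        Equiv.toPEquiv_apply, Option.mem_def, Option.some.injEq]
      by_cases h : (r : ℕ) = SpecAux.deg c i
      · rw [if_pos h, if_pos]
        rw [hσapp]
        exact (Fin.ext h).symm
      · rw [if_neg h, if_neg]
        rw [hσapp]
        intro he
        exact h (congrArg Fin.val he.symm)
    have hdet : specDet n c = ((Equiv.Perm.sign σ : ℤ) : ℂ) := by
      rw [specDet, hM, Matrix.det_transpose, Matrix.det_permutation]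
    have hne0 : specDet n c ≠ 0 := by
      rw [hdet]
      rcases Int.units_eq_one_or (Equiv.Perm.sign σ) with h | h <;> rw [h] <;> norm_num
    have htrans : ∀ i j k : Fin n, inducedTourRel n c i j = true →
        inducedTourRel n c j k = true → inducedTourRel n c i k = true := by
      intro i j k hij hjk
      rw [SpecAux.tour_iff c hn hinj] at hij hjk ⊢
      exact lt_trans hjk hij
    have hcond : ∀ e : SpinorEdge n, (c e = true) ↔ σ e.1.2 ≤ σ e.1.1 := by
      intro e
      obtain ⟨⟨i, j⟩, hij⟩ := e
      have hce : c ⟨(i, j), hij⟩ = inducedTourRel n c i j := by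
        rw [inducedTourRel, dif_pos hij]
      rw [hce, SpecAux.tour_iff c hn hinj]
      have hne : σ j ≠ σ i := fun he => absurd (σ.injective he) (ne_of_gt hij)
      rw [hne.le_iff_lt]
      exact ⟨fun h => Fin.mk_lt_mk.2 h, fun h => h⟩
    refine ⟨?_, ⟨fun _ => htrans, fun _ => hne0⟩, ?_⟩
    · rcases Int.units_eq_one_or (Equiv.Perm.sign σ) with h | h
      · left; rw [hdet, h]; norm_num
      · right; right; rw [hdet, h]; norm_num
    · intro _
      rw [spinorSign, SpecAux.prod_signAux c σ hcond, hdet, ← SpecAux.sign_eq_signAux σ]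
      rcases Int.units_eq_one_or (Equiv.Perm.sign σ) with h | h <;> rw [h] <;> norm_num
  · -- non-injective degree map: determinant vanishes, tournament not transitive
    obtain ⟨i, j, hij, hne⟩ := Function.not_injective_iff.1 hinj
    have hdeg : SpecAux.deg c i = SpecAux.deg c j := congrArg Fin.val hij
    have hdet0 : specDet n c = 0 := by
      rw [specDet]
      refine Matrix.det_zero_of_column_eq hne fun r => ?_
      simp only [Matrix.of_apply]
      rw [SpecAux.vertexPoly_eq, SpecAux.vertexPoly_eq, hdeg]
    refine ⟨Or.inr (Or.inl hdet0), ⟨fun h => absurd hdet0 h, fun hT => ?_⟩,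
      fun h => absurd hdet0 h⟩
    exact absurd (SpecAux.injective_of_transitive c hn hT) hinj
end

section
/- Let f be a multilinear form on n-tuples of vectors in F^n over a field F, and suppose the skew-symmetrization constant c(f) := ∑_{σ ∈ S_n} sgn(σ) f(e_{σ(1)}, ..., e_{σ(n)}) (evaluated at the standard basis) is nonzero. Then for any basis v_1, ..., v_n of F^n there exists a permutation σ ∈ S_n with f(v_{σ(1)}, ..., v_{σ(n)}) ≠ 0. -/
open Equiv Finset

/-- The choice principle: if the skew-symmetrization constant of a multilinear form `f` on
`n`-tuples in `Fⁿ` (evaluated at the standard basis) is nonzero, then for every basis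
`v_1, …, v_n` of `Fⁿ` some reordering of the `v_i` is not annihilated by `f`. -/
theorem choice_principle_single
    (F : Type*) [Field F] (n : ℕ) (hn : 0 < n)
    (f : MultilinearMap F (fun _ : Fin n => (Fin n → F)) F)
    (hc : (∑ σ : Equiv.Perm (Fin n),
      ((Equiv.Perm.sign σ : ℤ) : F) * f (fun i => Pi.single (σ i) (1 : F))) ≠ 0)
    (v : Fin n → (Fin n → F)) (hv : ∃ B : Module.Basis (Fin n) F (Fin n → F), ⇑B = v) :
    ∃ σ : Equiv.Perm (Fin n), f (fun i => v (σ i)) ≠ 0 := by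
  obtain ⟨B, rfl⟩ := hv
  set e := Pi.basisFun F (Fin n)
  set g := MultilinearMap.alternatization f with hg
  have hge : g ⇑e = ∑ σ : Equiv.Perm (Fin n),
      ((Equiv.Perm.sign σ : ℤ) : F) * f (fun i => Pi.single (σ i) (1 : F)) := by
    rw [hg, MultilinearMap.alternatization_apply]
    refine Finset.sum_congr rfl fun σ _ => ?_
    rw [MultilinearMap.domDomCongr_apply]
    rw [Units.smul_def, zsmul_eq_mul]
    congr 1
    refine congrArg f (funext fun i => ?_)
    simp [e, Pi.basisFun_apply]
  have key : g = g ⇑e • e.det := AlternatingMap.eq_smul_basis_det e g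
  have hdet : e.det ⇑B ≠ 0 := IsUnit.ne_zero (e.isUnit_det B)
  have hgB : g ⇑B ≠ 0 := by
    rw [key]
    simp only [AlternatingMap.smul_apply, smul_eq_mul]
    exact mul_ne_zero (hge ▸ hc) hdet
  rw [hg, MultilinearMap.alternatization_apply] at hgB
  obtain ⟨σ, -, hσ⟩ := Finset.exists_ne_zero_of_sum_ne_zero hgB
  refine ⟨σ, fun h => hσ ?_⟩
  rw [MultilinearMap.domDomCongr_apply, show (f fun i => ⇑B (σ i)) = 0 from h, smul_zero]
end

section
/- Let F be a field and let f be a multilinear form on k-tuples of square matrices of sizes n_1,...,n_k (linear in every column), with invariant I(f) = ∑_{σ ∈ Σ} sgn(σ) f(σ⁻¹·I) where Σ = S_{n_1}×...×S_{n_k} and I is the tuple of identity matrices. If I(f) ≠ 0 and A = (¹A,...,ᵏA) is a tuple in which every ⁱA is invertible, then there exists σ ∈ Σ with f(σ⁻¹·A) ≠ 0. -/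
open Equiv Finset

private lemma key_expand {F : Type*} [Field F] {k : ℕ} {n : Fin k → ℕ}
    (f : MultilinearMap F (fun p : (Σ i : Fin k, Fin (n i)) => (Fin (n p.1) → F)) F)
    (B : ∀ i : Fin k, Matrix (Fin (n i)) (Fin (n i)) F) :
    (∑ σ : ∀ i : Fin k, Equiv.Perm (Fin (n i)),
      (∏ i : Fin k, ((Equiv.Perm.sign (σ i) : ℤ) : F)) *
        f (fun p => fun r => B p.1 r (σ p.1 p.2)))
    = ∑ g : (∀ p : (Σ i : Fin k, Fin (n i)), Fin (n p.1)),
        f (fun p => Pi.single (g p) 1) *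
          ∏ i : Fin k, (Matrix.transpose (Matrix.of fun j l => B i (g ⟨i, j⟩) l)).det := by
  have h1 : ∀ σ : ∀ i : Fin k, Equiv.Perm (Fin (n i)),
      f (fun p => fun r => B p.1 r (σ p.1 p.2))
      = ∑ g : (∀ p : (Σ i : Fin k, Fin (n i)), Fin (n p.1)),
          (∏ p : (Σ i : Fin k, Fin (n i)), B p.1 (g p) (σ p.1 p.2)) *
            f (fun p => Pi.single (g p) 1) := by
    intro σ
    have harg : (fun p : (Σ i : Fin k, Fin (n i)) => fun r => B p.1 r (σ p.1 p.2))
        = fun p : (Σ i : Fin k, Fin (n i)) =>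
            ∑ c : Fin (n p.1), B p.1 c (σ p.1 p.2) • (Pi.single c 1 : Fin (n p.1) → F) := by
      funext p
      funext r
      simp [Pi.single_apply]
    rw [harg, MultilinearMap.map_sum]
    refine Finset.sum_congr rfl fun g _ => ?_
    rw [MultilinearMap.map_smul_univ, smul_eq_mul]
  calc
    (∑ σ : ∀ i : Fin k, Equiv.Perm (Fin (n i)),
      (∏ i : Fin k, ((Equiv.Perm.sign (σ i) : ℤ) : F)) *
        f (fun p => fun r => B p.1 r (σ p.1 p.2)))
      = ∑ σ : ∀ i : Fin k, Equiv.Perm (Fin (n i)),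
          ∑ g : (∀ p : (Σ i : Fin k, Fin (n i)), Fin (n p.1)),
            f (fun p => Pi.single (g p) 1) *
              ((∏ i : Fin k, ((Equiv.Perm.sign (σ i) : ℤ) : F)) *
                (∏ p : (Σ i : Fin k, Fin (n i)), B p.1 (g p) (σ p.1 p.2))) := by
        refine Finset.sum_congr rfl fun σ _ => ?_
        rw [h1 σ, Finset.mul_sum]
        refine Finset.sum_congr rfl fun g _ => ?_
        ring
    _ = ∑ g : (∀ p : (Σ i : Fin k, Fin (n i)), Fin (n p.1)),
          f (fun p => Pi.single (g p) 1) *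
            ∑ σ : ∀ i : Fin k, Equiv.Perm (Fin (n i)),
              ((∏ i : Fin k, ((Equiv.Perm.sign (σ i) : ℤ) : F)) *
                (∏ p : (Σ i : Fin k, Fin (n i)), B p.1 (g p) (σ p.1 p.2))) := by
        rw [Finset.sum_comm]
        exact Finset.sum_congr rfl fun g _ => (Finset.mul_sum _ _ _).symm
    _ = ∑ g : (∀ p : (Σ i : Fin k, Fin (n i)), Fin (n p.1)),
          f (fun p => Pi.single (g p) 1) *
            ∏ i : Fin k, (Matrix.transpose (Matrix.of fun j l => B i (g ⟨i, j⟩) l)).det := by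
        refine Finset.sum_congr rfl fun g _ => ?_
        congr 1
        have hsplit : ∀ σ : ∀ i : Fin k, Equiv.Perm (Fin (n i)),
            ((∏ i : Fin k, ((Equiv.Perm.sign (σ i) : ℤ) : F)) *
              (∏ p : (Σ i : Fin k, Fin (n i)), B p.1 (g p) (σ p.1 p.2)))
            = ∏ i : Fin k, (((Equiv.Perm.sign (σ i) : ℤ) : F) *
                ∏ j : Fin (n i), B i (g ⟨i, j⟩) (σ i j)) := by
          intro σ
          rw [Finset.prod_mul_distrib]
          congr 1
          rw [← Finset.univ_sigma_univ, Finset.prod_sigma]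
        simp_rw [hsplit]
        have hps := Finset.prod_univ_sum (fun i : Fin k => (univ : Finset (Equiv.Perm (Fin (n i)))))
          (fun i τ => ((Equiv.Perm.sign τ : ℤ) : F) * ∏ j : Fin (n i), B i (g ⟨i, j⟩) (τ j))
        rw [Fintype.piFinset_univ] at hps
        rw [← hps]
        refine Finset.prod_congr rfl fun i _ => ?_
        rw [Matrix.det_apply']
        refine Finset.sum_congr rfl fun τ _ => ?_
        congr 1

/-- The choice principle in the general setting: if the invariant `I(f)` (computed at the
tuple of identity matrices) is nonzero and every matrix in the tuple `A` is invertible, then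
some simultaneous permutation of the columns is not annihilated by `f`. -/
theorem choice_principle_general
    (F : Type*) [Field F] (k : ℕ) (hk : 1 ≤ k) (n : Fin k → ℕ) (hn : ∀ i, 0 < n i)
    (f : MultilinearMap F (fun p : (Σ i : Fin k, Fin (n i)) => (Fin (n p.1) → F)) F)
    (hI : (∑ σ : ∀ i : Fin k, Equiv.Perm (Fin (n i)),
      (∏ i : Fin k, ((Equiv.Perm.sign (σ i) : ℤ) : F)) *
        f (fun p => fun r => (1 : Matrix (Fin (n p.1)) (Fin (n p.1)) F) r (σ p.1 p.2))) ≠ 0)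
    (A : ∀ i : Fin k, Matrix (Fin (n i)) (Fin (n i)) F)
    (hA : ∀ i : Fin k, IsUnit (A i).det) :
    ∃ σ : ∀ i : Fin k, Equiv.Perm (Fin (n i)),
      f (fun p => fun r => A p.1 r (σ p.1 p.2)) ≠ 0 := by
  by_contra h
  push_neg at h
  have hSA : (∑ σ : ∀ i : Fin k, Equiv.Perm (Fin (n i)),
      (∏ i : Fin k, ((Equiv.Perm.sign (σ i) : ℤ) : F)) *
        f (fun p => fun r => A p.1 r (σ p.1 p.2))) = 0 := by
    simp [h]
  rw [key_expand] at hSA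
  rw [key_expand f (fun i => 1)] at hI
  -- factor each det
  have hfac : ∀ (g : ∀ p : (Σ i : Fin k, Fin (n i)), Fin (n p.1)) (i : Fin k),
      (Matrix.transpose (Matrix.of fun j l => A i (g ⟨i, j⟩) l)).det
      = (Matrix.transpose (Matrix.of fun j l => (1 : Matrix (Fin (n i)) (Fin (n i)) F) (g ⟨i, j⟩) l)).det *
          (A i).det := by
    intro g i
    rw [Matrix.det_transpose, Matrix.det_transpose, ← Matrix.det_mul]
    congr 1
    ext j l
    simp [Matrix.mul_apply, Matrix.one_apply]
  have : (∑ g : (∀ p : (Σ i : Fin k, Fin (n i)), Fin (n p.1)),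
        f (fun p => Pi.single (g p) 1) *
          ∏ i : Fin k, (Matrix.transpose (Matrix.of fun j l => A i (g ⟨i, j⟩) l)).det)
      = (∏ i : Fin k, (A i).det) *
        ∑ g : (∀ p : (Σ i : Fin k, Fin (n i)), Fin (n p.1)),
          f (fun p => Pi.single (g p) 1) *
            ∏ i : Fin k, (Matrix.transpose (Matrix.of fun j l =>
              (1 : Matrix (Fin (n i)) (Fin (n i)) F) (g ⟨i, j⟩) l)).det := by
    rw [Finset.mul_sum]
    refine Finset.sum_congr rfl fun g _ => ?_
    simp_rw [hfac g]
    rw [Finset.prod_mul_distrib]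
    ring
  rw [this] at hSA
  have hdet : (∏ i : Fin k, (A i).det) ≠ 0 :=
    Finset.prod_ne_zero_iff.mpr fun i _ => (hA i).ne_zero
  exact hI (by
    rcases mul_eq_zero.mp hSA with h0 | h0
    · exact absurd h0 hdet
    · exact h0)
end

section
/- For any n ≥ 1 and any field F of characteristic 0, the identity ∑_{(σ_1,...,σ_n) ∈ (S_n)^n} (∏_i sgn σ_i) · ∏_{j=1}^n det(e_{σ_1(j)}, ..., e_{σ_n(j)}) = ∑_{L} sgn(L), where the right-hand sum is over all n×n Latin squares L with entries L(i,j) = σ_i(j), and sgn(L) is the product of the signs of the n row permutations and n column permutations of L. In particular, the left-hand side vanishes for all odd n ≥ 3. -/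
open Equiv Finset

lemma det_ifMatrix {F : Type*} [Field F] {n : ℕ} (τ : Equiv.Perm (Fin n)) :
    (Matrix.of fun r i : Fin n => if r = τ i then (1 : F) else 0).det
      = ((Equiv.Perm.sign τ : ℤ) : F) := by
  have : (Matrix.of fun r i : Fin n => if r = τ i then (1 : F) else 0)
      = Matrix.transpose (τ.permMatrix F) := by
    ext r i
    simp [PEquiv.toMatrix, Equiv.toPEquiv_apply, Matrix.transpose_apply, Option.mem_def,
      eq_comm]
  rw [this, Matrix.det_transpose, Matrix.det_permutation]

lemma sign_ofBijective_congr {n : ℕ} {f g : Fin n → Fin n} (hf : Function.Bijective f)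
    (hg : Function.Bijective g) (h : f = g) :
    Equiv.Perm.sign (Equiv.ofBijective f hf) = Equiv.Perm.sign (Equiv.ofBijective g hg) := by
  subst h; rfl

lemma latinSquareSignedCount_eq_zero {n : ℕ} (hodd : Odd n) (h3 : 3 ≤ n) :
    latinSquareSignedCount n = 0 := by
  haveI : NeZero n := ⟨by omega⟩
  have hn0 : (0 : Fin n) ≠ 1 := by
    intro h
    have h0 : ((0 : Fin n) : ℕ) = 0 := rfl
    have h1 : ((1 : Fin n) : ℕ) = 1 % n := rfl
    have := congrArg (Fin.val) h
    rw [h0, h1, Nat.mod_eq_of_lt (by omega)] at this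
    omega
  set s : Equiv.Perm (Fin n) := Equiv.swap (0 : Fin n) 1 with hs
  have hss : ∀ j : Fin n, s (s j) = j := fun j => Equiv.swap_apply_self _ _ _
  have hsign : (Equiv.Perm.sign s : ℤ) = -1 := by
    rw [hs, Equiv.Perm.sign_swap hn0]; rfl
  rw [latinSquareSignedCount]
  apply Finset.sum_ninvolution (fun σ => fun i => σ i * s)
  · intro σ
    by_cases h : ∀ j : Fin n, Function.Injective fun i => σ i j
    · have h' : ∀ j : Fin n, Function.Injective fun i => (σ i * s) j := by
        intro j
        have := h (s j)
        simpa using this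
      rw [dif_pos h, dif_pos h']
      have hrow : (∏ i : Fin n, ((Equiv.Perm.sign (σ i * s) : ℤ)))
          = -(∏ i : Fin n, ((Equiv.Perm.sign (σ i) : ℤ))) := by
        have : ∀ i : Fin n, ((Equiv.Perm.sign (σ i * s) : ℤ))
            = ((Equiv.Perm.sign (σ i) : ℤ)) * (-1) := by
          intro i
          rw [Equiv.Perm.sign_mul]
          push_cast
          rw [hsign]
        rw [Finset.prod_congr rfl fun i _ => this i, Finset.prod_mul_distrib,
          Finset.prod_const, Finset.card_univ, Fintype.card_fin, hodd.neg_one_pow]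
        ring
      have hcol : (∏ j : Fin n, ((Equiv.Perm.sign
            (Equiv.ofBijective (fun i => (σ i * s) j)
              ((Finite.injective_iff_bijective).mp (h' j))) : ℤ)))
          = ∏ j : Fin n, ((Equiv.Perm.sign
            (Equiv.ofBijective (fun i => σ i j)
              ((Finite.injective_iff_bijective).mp (h j))) : ℤ)) := by
        have step : ∀ j : Fin n, ((Equiv.Perm.sign
            (Equiv.ofBijective (fun i => (σ i * s) j)
              ((Finite.injective_iff_bijective).mp (h' j))) : ℤ))
            = ((Equiv.Perm.sign
            (Equiv.ofBijective (fun i => σ i (s j))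
              ((Finite.injective_iff_bijective).mp (h (s j)))) : ℤ)) := by
          intro j
          exact_mod_cast sign_ofBijective_congr _ _ (funext fun i => rfl)
        rw [Finset.prod_congr rfl fun j _ => step j]
        exact Equiv.prod_comp s (fun j => ((Equiv.Perm.sign
            (Equiv.ofBijective (fun i => σ i j)
              ((Finite.injective_iff_bijective).mp (h j))) : ℤ)))
      rw [hrow, hcol]
      ring
    · have h' : ¬ ∀ j : Fin n, Function.Injective fun i => (σ i * s) j := by
        intro h'
        apply h
        intro j
        have := h' (s j)
        simp only [Equiv.Perm.mul_apply, hss] at this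
        exact this
      rw [dif_neg h, dif_neg h', add_zero]
  · intro σ _
    intro heq
    have := congrFun heq ⟨0, by omega⟩
    have hs1 : s = 1 := mul_left_cancel (a := σ ⟨0, by omega⟩) (by rw [mul_one]; exact this)
    have h01 : s (0 : Fin n) = 0 := by rw [hs1]; rfl
    rw [hs, Equiv.swap_apply_left] at h01
    exact hn0 h01.symm
  · intro σ; exact Finset.mem_univ _
  · intro σ
    funext i
    rw [mul_assoc]
    simp [hs]

/-- The alternating sum over `(S_n)ⁿ` of products of determinants of standard basis vectors
equals the signed count of `n × n` Latin squares; in particular it vanishes for odd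
`n ≥ 3`. -/
theorem alternating_sum_eq_signed_latin_count_and_vanishes_for_odd
    (F : Type*) [Field F] [CharZero F] (n : ℕ) (hn : 1 ≤ n) :
    (∑ σ : Fin n → Equiv.Perm (Fin n),
      (∏ i : Fin n, ((Equiv.Perm.sign (σ i) : ℤ) : F)) *
        ∏ j : Fin n, (Matrix.of fun r i : Fin n => if r = σ i j then (1 : F) else 0).det)
      = (latinSquareSignedCount n : F) ∧
    (Odd n → 3 ≤ n →
      (∑ σ : Fin n → Equiv.Perm (Fin n),
        (∏ i : Fin n, ((Equiv.Perm.sign (σ i) : ℤ) : F)) *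
          ∏ j : Fin n, (Matrix.of fun r i : Fin n => if r = σ i j then (1 : F) else 0).det)
        = 0) := by
  have key : (∑ σ : Fin n → Equiv.Perm (Fin n),
      (∏ i : Fin n, ((Equiv.Perm.sign (σ i) : ℤ) : F)) *
        ∏ j : Fin n, (Matrix.of fun r i : Fin n => if r = σ i j then (1 : F) else 0).det)
      = (latinSquareSignedCount n : F) := by
    rw [latinSquareSignedCount, Int.cast_sum]
    refine Finset.sum_congr rfl fun σ _ => ?_
    by_cases h : ∀ j : Fin n, Function.Injective fun i => σ i j
    · rw [dif_pos h]
      push_cast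
      congr 1
      refine Finset.prod_congr rfl fun j _ => ?_
      exact det_ifMatrix (Equiv.ofBijective (fun i => σ i j)
        ((Finite.injective_iff_bijective).mp (h j)))
    · rw [dif_neg h]
      push_neg at h
      obtain ⟨j, hj⟩ := h
      rw [Function.not_injective_iff] at hj
      obtain ⟨a, b, hab, hne⟩ := hj
      have hdet : (Matrix.of fun r i : Fin n => if r = σ i j then (1 : F) else 0).det = 0 := by
        apply Matrix.det_zero_of_column_eq hne
        intro k
        simp [hab]
      have hz : (∏ j : Fin n,
          (Matrix.of fun r i : Fin n => if r = σ i j then (1 : F) else 0).det) = 0 :=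
        Finset.prod_eq_zero (Finset.mem_univ j) hdet
      rw [hz, mul_zero, Int.cast_zero]
  refine ⟨key, fun hodd h3 => ?_⟩
  rw [key, latinSquareSignedCount_eq_zero hodd h3, Int.cast_zero]
end

section
/- Let F be a field of characteristic 0. Define the multilinear form f on n-tuples (¹A,...,ⁿA) of n×n matrices by f(¹A,...,ⁿA) = ∏_{j=1}^n det(¹Aʲ, ²Aʲ, ..., ⁿAʲ), where ⁱAʲ is the j-th column of ⁱA. Then f is linear in each of the n² columns, and the invariant I(f) from the general determinantal identity equals l(n), the signed count of n×n Latin squares. -/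
open Equiv Finset

noncomputable def colorfulForm (F : Type*) [Field F] (n : ℕ) :
    MultilinearMap F (fun _ : Fin n × Fin n => (Fin n → F)) F where
  toFun v := ∏ j : Fin n, Matrix.detRowAlternating (fun i => v (i, j))
  map_update_add' v p x y := by
    classical
    have hg : ∀ X : Fin n → F,
        (fun j => (Matrix.detRowAlternating (fun i => Function.update v p X (i, j)) : F)) =
          Function.update (fun j => (Matrix.detRowAlternating (fun i => v (i, j)) : F)) p.2
            (Matrix.detRowAlternating (Function.update (fun i => v (i, p.2)) p.1 X)) := by
      intro X
      funext j
      by_cases hj : j = p.2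
      · subst hj
        rw [Function.update_self]
        congr 1
        funext i
        by_cases hi : i = p.1
        · subst hi
          rw [Function.update_self,
            Function.update_self]
        · rw [Function.update_of_ne hi, Function.update_of_ne (by simp [Prod.ext_iff, hi])]
      · rw [Function.update_of_ne hj]
        congr 1
        funext i
        rw [Function.update_of_ne (by simp [Prod.ext_iff, hj])]
    show (∏ j : Fin n, _) = (∏ j : Fin n, _) + (∏ j : Fin n, _)
    rw [show (fun j => (Matrix.detRowAlternating (fun i => Function.update v p (x + y) (i, j)) : F)) = _ from hg (x+y),
        show (fun j => (Matrix.detRowAlternating (fun i => Function.update v p x (i, j)) : F)) = _ from hg x,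
        show (fun j => (Matrix.detRowAlternating (fun i => Function.update v p y (i, j)) : F)) = _ from hg y]
    rw [Finset.prod_update_of_mem (Finset.mem_univ p.2),
        Finset.prod_update_of_mem (Finset.mem_univ p.2),
        Finset.prod_update_of_mem (Finset.mem_univ p.2)]
    rw [AlternatingMap.map_update_add, add_mul]
  map_update_smul' v p c x := by
    classical
    have hg : ∀ X : Fin n → F,
        (fun j => (Matrix.detRowAlternating (fun i => Function.update v p X (i, j)) : F)) =
          Function.update (fun j => (Matrix.detRowAlternating (fun i => v (i, j)) : F)) p.2
            (Matrix.detRowAlternating (Function.update (fun i => v (i, p.2)) p.1 X)) := by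
      intro X
      funext j
      by_cases hj : j = p.2
      · subst hj
        rw [Function.update_self]
        congr 1
        funext i
        by_cases hi : i = p.1
        · subst hi
          rw [Function.update_self,
            Function.update_self]
        · rw [Function.update_of_ne hi, Function.update_of_ne (by simp [Prod.ext_iff, hi])]
      · rw [Function.update_of_ne hj]
        congr 1
        funext i
        rw [Function.update_of_ne (by simp [Prod.ext_iff, hj])]
    show (∏ j : Fin n, _) = c • (∏ j : Fin n, _)
    rw [show (fun j => (Matrix.detRowAlternating (fun i => Function.update v p (c • x) (i, j)) : F)) = _ from hg (c • x),
        show (fun j => (Matrix.detRowAlternating (fun i => Function.update v p x (i, j)) : F)) = _ from hg x]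
    rw [Finset.prod_update_of_mem (Finset.mem_univ p.2),
        Finset.prod_update_of_mem (Finset.mem_univ p.2)]
    rw [AlternatingMap.map_update_smul, smul_eq_mul, smul_eq_mul, mul_assoc]

/-- The colorful form `f(¹A, …, ⁿA) = ∏_j det(¹Aʲ, …, ⁿAʲ)` is multilinear in each of the
`n²` columns (indexed by pairs `(i, j)`: the `j`-th column of the `i`-th matrix), and its
invariant `I(f)` — computed by evaluating the skew-symmetrized form at identity matrices —
equals the signed count of `n × n` Latin squares. -/
theorem colorful_form_multilinear_and_invariant
    (F : Type*) [Field F] [CharZero F] (n : ℕ) (hn : 0 < n) :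
    ∃ f : MultilinearMap F (fun _ : Fin n × Fin n => (Fin n → F)) F,
      (∀ v : Fin n × Fin n → (Fin n → F),
        f v = ∏ j : Fin n, (Matrix.of fun r i : Fin n => v (i, j) r).det) ∧
      (∑ σ : Fin n → Equiv.Perm (Fin n),
        (∏ i : Fin n, ((Equiv.Perm.sign (σ i) : ℤ) : F)) *
          f (fun p => Pi.single (σ p.1 p.2) (1 : F)))
        = (latinSquareSignedCount n : F) := by
  classical
  refine ⟨colorfulForm F n, fun v => ?_, ?_⟩
  · show (∏ j : Fin n, (Matrix.detRowAlternating (fun i => v (i, j)) : F)) = _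
    refine Finset.prod_congr rfl fun j _ => ?_
    rw [← Matrix.det_transpose]
    rfl
  · rw [latinSquareSignedCount, Int.cast_sum]
    refine Finset.sum_congr rfl fun σ _ => ?_
    have hdet : ∀ (e : Equiv.Perm (Fin n)),
        Matrix.detRowAlternating (fun i => Pi.single (e i) (1 : F)) =
          ((Equiv.Perm.sign e : ℤ) : F) := by
      intro e
      have h1 : (Matrix.of fun i => Pi.single (e i) (1 : F)) = e.permMatrix F := by
        ext i r
        simp [Equiv.Perm.permMatrix, PEquiv.toMatrix_apply, Equiv.toPEquiv_apply,
          Pi.single_apply, eq_comm]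
      have : Matrix.detRowAlternating (fun i => Pi.single (e i) (1 : F)) =
          (Matrix.of fun i => Pi.single (e i) (1 : F)).det := rfl
      rw [this, h1, Matrix.det_permutation]
    by_cases h : ∀ j : Fin n, Function.Injective fun i => σ i j
    · rw [dif_pos h]
      have hf : (colorfulForm F n) (fun p => Pi.single (σ p.1 p.2) (1 : F)) =
          ∏ j : Fin n, ((Equiv.Perm.sign
            (Equiv.ofBijective (fun i => σ i j)
              ((Finite.injective_iff_bijective).mp (h j))) : ℤ) : F) := by
        show (∏ j : Fin n, (Matrix.detRowAlternating
          (fun i => Pi.single (σ i j) (1 : F)) : F)) = _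
        refine Finset.prod_congr rfl fun j _ => ?_
        rw [← hdet (Equiv.ofBijective (fun i => σ i j)
          ((Finite.injective_iff_bijective).mp (h j)))]
        rfl
      rw [hf]
      push_cast
      ring
    · rw [dif_neg h, Int.cast_zero]
      push_neg at h
      obtain ⟨j, hj⟩ := h
      rw [Function.not_injective_iff] at hj
      obtain ⟨i, i', hee, hne⟩ := hj
      have hf : (colorfulForm F n) (fun p => Pi.single (σ p.1 p.2) (1 : F)) = 0 := by
        show (∏ j : Fin n, (Matrix.detRowAlternating
          (fun i => Pi.single (σ i j) (1 : F)) : F)) = 0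
        refine Finset.prod_eq_zero (Finset.mem_univ j) ?_
        have : Matrix.detRowAlternating (fun i => Pi.single (σ i j) (1 : F)) =
            (Matrix.of fun i => Pi.single (σ i j) (1 : F)).det := rfl
        rw [this]
        exact Matrix.det_zero_of_row_eq hne (congrArg (fun a => Pi.single a (1 : F)) hee)
      rw [hf, mul_zero]
end
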